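/- arXiv:math/0411086 — 7 statements merged into one kernel-verified Lean document; each statement's English description precedes it below -/
import Mathlib

section
/- Let D ⊂ ℂⁿ be a bounded domain and let f : D → D be a holomorphic map such that the closure of f(D) is a compact subset of D. Then f has a unique fixed point z₀ ∈ D, and the sequence of iterates f^k converges uniformly on compact subsets of D to the constant map z₀. -/
/-!
Earle–Hamilton argument. Since `f '' D` stays a positive distance `δ` away from the complement of
the bounded domain `D`, there is `r > 1` such that each dilation `w ↦ f p + r • (f w - f p)` still
maps `D` into itself. Pulling a holomorphic test function `ℓ : D → 𝔻` back along this dilation shows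
that `f` contracts the Carathéodory infinitesimal metric by the factor `r⁻¹`. By the Schwarz lemma
this metric is at most `‖v‖ / s` at the centre of a ball of radius `s` in `D`, and by Hahn–Banach it
is at least `‖v‖ / (diam D + 1)`; hence `‖D(f^[k])‖` decays like `r⁻¹ ^ k` locally, nearby orbits
approach each other geometrically, and, `D` being connected, so do any two orbits. Orbits are thus
Cauchy, converge to a fixed point in `closure (f '' D) ⊆ D`, which is unique and attracts
locally uniformly.
-/

open Metric Set Filter Function
open scoped Topology

section Caratheodory

variable {E : Type*} [NormedAddCommGroup E] [NormedSpace ℂ E]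

/-- The competitors in the Carathéodory infinitesimal metric of `D` at `z`: normalising by
`ℓ z = 0` is unnecessary, since only the oscillation of `ℓ` matters for the Schwarz lemma. -/
def caratheodoryFamily (D : Set E) (z : E) : Set (E → ℂ) :=
  {ℓ | DifferentiableOn ℂ ℓ D ∧ MapsTo ℓ D (closedBall (ℓ z) 1)}

theorem norm_fderiv_le_of_mem_caratheodoryFamily {D : Set E} {z : E} {ℓ : E → ℂ} {s : ℝ}
    (hℓ : ℓ ∈ caratheodoryFamily D z) (hs : 0 < s) (hball : ball z s ⊆ D) :
    ‖fderiv ℂ ℓ z‖ ≤ 1 / s :=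
  Complex.norm_fderiv_le_div_of_mapsTo_ball (hℓ.1.mono hball) (hℓ.2.mono_left hball) hs

theorem exists_mem_caratheodoryFamily_norm_le {D : Set E} {c : E} {M : ℝ} (hM : 0 < M)
    (hD : D ⊆ closedBall c M) (x : E) :
    ∃ ℓ ∈ caratheodoryFamily D c, ‖x‖ ≤ M * ‖fderiv ℂ ℓ c x‖ := by
  obtain ⟨g, hg, hgx⟩ := exists_dual_vector'' ℂ x
  set L : StrongDual ℂ E := (M : ℂ)⁻¹ • g
  have hL : ‖L‖ ≤ M⁻¹ := by
    calc ‖L‖ = M⁻¹ * ‖g‖ := by rw [norm_smul, norm_inv, Complex.norm_of_nonneg hM.le]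
      _ ≤ M⁻¹ * 1 := by gcongr
      _ = M⁻¹ := mul_one _
  refine ⟨L, ⟨L.differentiable.differentiableOn, fun w hw => ?_⟩, ?_⟩
  · rw [mem_closedBall, dist_eq_norm, ← map_sub]
    calc ‖L (w - c)‖ ≤ M⁻¹ * ‖w - c‖ := L.le_of_opNorm_le hL _
      _ ≤ M⁻¹ * M := by gcongr; exact mem_closedBall_iff_norm.1 (hD hw)
      _ = 1 := inv_mul_cancel₀ hM.ne'
  · rw [L.fderiv]
    simp [L, hgx, hM.ne', abs_of_pos hM]

variable {f : E → E} {D : Set E}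

theorem exists_one_lt_forall_mapsTo_dilation {δ : ℝ} (hb : Bornology.IsBounded (f '' D))
    (hδ : 0 < δ) (hthick : thickening δ (f '' D) ⊆ D) :
    ∃ r > (1 : ℝ), ∀ p ∈ D, MapsTo (fun w => f p + (r : ℂ) • (f w - f p)) D D := by
  set d := diam (f '' D)
  have hd : 0 ≤ d := diam_nonneg
  refine ⟨1 + δ / (d + 1), by simp only [gt_iff_lt, lt_add_iff_pos_right]; positivity,
    fun p hp w hw => hthick (mem_thickening_iff.2 ⟨f w, mem_image_of_mem f hw, ?_⟩)⟩
  have hdist : dist (f w) (f p) ≤ d :=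
    dist_le_diam_of_mem hb (mem_image_of_mem f hw) (mem_image_of_mem f hp)
  have hshift : f p + ((1 + δ / (d + 1) : ℝ) : ℂ) • (f w - f p) - f w
      = ((δ / (d + 1) : ℝ) : ℂ) • (f w - f p) := by
    push_cast; module
  rw [dist_eq_norm, hshift, norm_smul, Complex.norm_real, Real.norm_of_nonneg (by positivity),
    ← dist_eq_norm]
  calc δ / (d + 1) * dist (f w) (f p) ≤ δ / (d + 1) * d := by gcongr
    _ < δ / (d + 1) * (d + 1) := by gcongr; linarith
    _ = δ := div_mul_cancel₀ δ (by positivity)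

theorem comp_dilation_mem_caratheodoryFamily {r : ℂ} {p : E} {ℓ : E → ℂ}
    (hf : DifferentiableOn ℂ f D) (hdil : MapsTo (fun w => f p + r • (f w - f p)) D D)
    (hℓ : ℓ ∈ caratheodoryFamily D (f p)) :
    ℓ ∘ (fun w => f p + r • (f w - f p)) ∈ caratheodoryFamily D p := by
  refine ⟨hℓ.1.comp (((hf.sub_const _).const_smul r).const_add _) hdil, fun w hw => ?_⟩
  simpa using hℓ.2 (hdil hw)

theorem hasFDerivAt_comp_dilation {r : ℂ} {p : E} {ℓ : E → ℂ}
    (hℓ : DifferentiableAt ℂ ℓ (f p)) (hf : DifferentiableAt ℂ f p) :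
    HasFDerivAt (ℓ ∘ fun w => f p + r • (f w - f p))
      (r • (fderiv ℂ ℓ (f p)).comp (fderiv ℂ f p)) p := by
  have hdil : HasFDerivAt (fun w => f p + r • (f w - f p)) (r • fderiv ℂ f p) p :=
    ((hf.hasFDerivAt.sub_const _).const_smul r).const_add _
  have hℓ' : HasFDerivAt ℓ (fderiv ℂ ℓ (f p)) (f p + r • (f p - f p)) := by
    simpa using hℓ.hasFDerivAt
  rw [← ContinuousLinearMap.comp_smul]
  exact hℓ'.comp p hdil

/-- `ℓ'` is `ℓ` pulled back successively along the dilations at `f^[k-1] z`, …, `f z`, `z`. -/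
theorem exists_mem_caratheodoryFamily_fderiv_iterate_eq {r : ℂ} (hD : IsOpen D)
    (hf : DifferentiableOn ℂ f D) (hmaps : MapsTo f D D)
    (hdil : ∀ p ∈ D, MapsTo (fun w => f p + r • (f w - f p)) D D) (k : ℕ) {z : E} (hz : z ∈ D)
    {ℓ : E → ℂ} (hℓ : ℓ ∈ caratheodoryFamily D (f^[k] z)) :
    ∃ ℓ' ∈ caratheodoryFamily D z,
      fderiv ℂ ℓ' z = r ^ k • (fderiv ℂ ℓ (f^[k] z)).comp (fderiv ℂ f^[k] z) := by
  induction k generalizing z with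
  | zero => exact ⟨ℓ, hℓ, by simp⟩
  | succ k ih =>
    rw [iterate_succ_apply] at hℓ ⊢
    obtain ⟨ℓ₁, hℓ₁, hderiv₁⟩ := ih (hmaps hz) hℓ
    have hfz : DifferentiableAt ℂ f z := hf.differentiableAt (hD.mem_nhds hz)
    have hfk : DifferentiableAt ℂ f^[k] (f z) :=
      (hf.iterate hmaps k).differentiableAt (hD.mem_nhds (hmaps hz))
    refine ⟨_, comp_dilation_mem_caratheodoryFamily hf (hdil z hz) hℓ₁, ?_⟩
    rw [(hasFDerivAt_comp_dilation (hℓ₁.1.differentiableAt (hD.mem_nhds (hmaps hz))) hfz).fderiv,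
      hderiv₁, iterate_succ, fderiv_comp z hfk hfz]
    ext v
    simp [pow_succ, mul_smul, smul_comm r]

theorem norm_fderiv_iterate_le {r M : ℝ} (hD : IsOpen D) (hf : DifferentiableOn ℂ f D)
    (hmaps : MapsTo f D D) (hdil : ∀ p ∈ D, MapsTo (fun w => f p + (r : ℂ) • (f w - f p)) D D)
    (hr : 0 < r) (hM : 0 < M) (hDM : ∀ c ∈ D, D ⊆ closedBall c M) (k : ℕ) {z : E} {s : ℝ}
    (hs : 0 < s) (hball : ball z s ⊆ D) :
    ‖fderiv ℂ f^[k] z‖ ≤ M / (r ^ k * s) := by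
  have hz : z ∈ D := hball (mem_ball_self hs)
  refine ContinuousLinearMap.opNorm_le_bound _ (by positivity) fun v => ?_
  set x := fderiv ℂ f^[k] z v
  obtain ⟨ℓ, hℓ, hx⟩ :=
    exists_mem_caratheodoryFamily_norm_le hM (hDM _ (hmaps.iterate k hz)) x
  obtain ⟨ℓ', hℓ', hderiv⟩ :=
    exists_mem_caratheodoryFamily_fderiv_iterate_eq hD hf hmaps hdil k hz hℓ
  have hschwarz : r ^ k * ‖fderiv ℂ ℓ (f^[k] z) x‖ ≤ ‖v‖ / s := by
    calc r ^ k * ‖fderiv ℂ ℓ (f^[k] z) x‖ = ‖fderiv ℂ ℓ' z v‖ := by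
          simp [hderiv, x, abs_of_pos hr]
      _ ≤ 1 / s * ‖v‖ :=
          (fderiv ℂ ℓ' z).le_of_opNorm_le (norm_fderiv_le_of_mem_caratheodoryFamily hℓ' hs hball) v
      _ = ‖v‖ / s := by ring
  calc ‖x‖ ≤ M * ‖fderiv ℂ ℓ (f^[k] z) x‖ := hx
    _ ≤ M * (‖v‖ / s / r ^ k) := by
        gcongr
        rw [le_div_iff₀ (by positivity), mul_comm]
        exact hschwarz
    _ = M / (r ^ k * s) * ‖v‖ := by field_simp

theorem eventually_dist_iterate_le {r M : ℝ} (hD : IsOpen D) (hf : DifferentiableOn ℂ f D)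
    (hmaps : MapsTo f D D) (hdil : ∀ p ∈ D, MapsTo (fun w => f p + (r : ℂ) • (f w - f p)) D D)
    (hr : 0 < r) (hM : 0 < M) (hDM : ∀ c ∈ D, D ⊆ closedBall c M) {z : E} (hz : z ∈ D) :
    ∀ᶠ w in 𝓝 z, ∀ k, dist (f^[k] w) (f^[k] z) ≤ M * r⁻¹ ^ k := by
  obtain ⟨s, hs, hball⟩ := Metric.isOpen_iff.1 hD z hz
  have hs2 : 0 < s / 2 := half_pos hs
  filter_upwards [ball_mem_nhds z hs2] with w hw k
  have hbound : ∀ y ∈ ball z (s / 2), ‖fderiv ℂ f^[k] y‖ ≤ M / (r ^ k * (s / 2)) := by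
    refine fun y hy => norm_fderiv_iterate_le hD hf hmaps hdil hr hM hDM k hs2
      ((ball_subset_ball' ?_).trans hball)
    rw [mem_ball] at hy
    linarith
  have hdiff : ∀ y ∈ ball z (s / 2), DifferentiableAt ℂ f^[k] y := fun y hy =>
    (hf.iterate hmaps k).differentiableAt (hD.mem_nhds (hball (ball_subset_ball (by linarith) hy)))
  rw [dist_eq_norm]
  calc ‖f^[k] w - f^[k] z‖ ≤ M / (r ^ k * (s / 2)) * ‖w - z‖ :=
        (convex_ball z (s / 2)).norm_image_sub_le_of_norm_fderiv_le hdiff hbound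
          (mem_ball_self hs2) hw
    _ ≤ M / (r ^ k * (s / 2)) * (s / 2) := by
        gcongr
        exact (mem_ball_iff_norm.1 hw).le
    _ = M * r⁻¹ ^ k := by rw [inv_pow]; field_simp

end Caratheodory

section GeometricConvergence

variable {X : Type*} {f : X → X} {q C : ℝ}

theorem exists_dist_iterate_le_of_isPreconnected [PseudoMetricSpace X] {D : Set X}
    (hD : IsPreconnected D)
    (hloc : ∀ z ∈ D, ∀ᶠ w in 𝓝 z, ∀ k, dist (f^[k] w) (f^[k] z) ≤ C * q ^ k)
    {a b : X} (ha : a ∈ D) (hb : b ∈ D) :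
    ∃ C', ∀ k, dist (f^[k] a) (f^[k] b) ≤ C' * q ^ k := by
  refine hD.induction₂ (fun a b => ∃ C', ∀ k, dist (f^[k] a) (f^[k] b) ≤ C' * q ^ k)
    (fun z hz => ?_) (fun x y w _ _ _ => ?_) (fun x y _ _ => ?_) ha hb
  · filter_upwards [nhdsWithin_le_nhds (hloc z hz)] with w hw
    exact ⟨C, fun k => dist_comm (f^[k] z) _ ▸ hw k⟩
  · rintro ⟨C₁, h₁⟩ ⟨C₂, h₂⟩
    exact ⟨C₁ + C₂, fun k => (dist_triangle _ _ _).trans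
      (add_mul C₁ C₂ (q ^ k) ▸ add_le_add (h₁ k) (h₂ k))⟩
  · rintro ⟨C', h⟩
    exact ⟨C', fun k => dist_comm (f^[k] x) _ ▸ h k⟩

theorem exists_tendsto_iterate_mem_closure_image [PseudoMetricSpace X] [CompleteSpace X]
    {D : Set X} (hq : q < 1) (hmaps : MapsTo f D D) {a : X} (ha : a ∈ D)
    (h : ∀ k, dist (f^[k] a) (f^[k] (f a)) ≤ C * q ^ k) :
    ∃ z ∈ closure (f '' D), Tendsto (fun k => f^[k] a) atTop (𝓝 z) := by
  have hcauchy : CauchySeq fun k => f^[k] a :=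
    cauchySeq_of_le_geometric q C hq fun k => by simpa only [iterate_succ_apply] using h k
  obtain ⟨z, hz⟩ := cauchySeq_tendsto_of_complete hcauchy
  refine ⟨z, mem_closure_of_tendsto ((tendsto_add_atTop_iff_nat 1).2 hz) ?_, hz⟩
  exact Eventually.of_forall fun k =>
    ⟨f^[k] a, hmaps.iterate k ha, (iterate_succ_apply' f k a).symm⟩

theorem tendstoLocallyUniformlyOn_iterate [PseudoMetricSpace X] {D : Set X} {z₀ : X}
    (hq₀ : 0 ≤ q) (hq : q < 1) (hz₀ : IsFixedPt f z₀)
    (hloc : ∀ z ∈ D, ∀ᶠ w in 𝓝 z, ∀ k, dist (f^[k] w) (f^[k] z) ≤ C * q ^ k)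
    (hglob : ∀ z ∈ D, ∃ C', ∀ k, dist (f^[k] z) (f^[k] z₀) ≤ C' * q ^ k) :
    TendstoLocallyUniformlyOn (fun k => f^[k]) (fun _ => z₀) atTop D := by
  refine Metric.tendstoLocallyUniformlyOn_iff.2 fun ε hε z hz => ?_
  obtain ⟨C', hC'⟩ := hglob z hz
  have hsmall : ∀ᶠ k in atTop, (C + C') * q ^ k < ε := by
    have := (tendsto_pow_atTop_nhds_zero_of_lt_one hq₀ hq).const_mul (C + C')
    rw [mul_zero] at this
    exact this.eventually (gt_mem_nhds hε)
  refine ⟨_, mem_nhdsWithin_of_mem_nhds (hloc z hz), ?_⟩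
  filter_upwards [hsmall] with k hk w hw
  calc dist z₀ (f^[k] w) = dist (f^[k] w) (f^[k] z₀) := by rw [dist_comm, (hz₀.iterate k).eq]
    _ ≤ dist (f^[k] w) (f^[k] z) + dist (f^[k] z) (f^[k] z₀) := dist_triangle _ _ _
    _ ≤ (C + C') * q ^ k := by rw [add_mul]; exact add_le_add (hw k) (hC' k)
    _ < ε := hk

theorem IsFixedPt.eq_of_dist_iterate_le [MetricSpace X] {a b : X} (hq₀ : 0 ≤ q) (hq : q < 1)
    (ha : IsFixedPt f a) (hb : IsFixedPt f b)
    (h : ∀ k, dist (f^[k] a) (f^[k] b) ≤ C * q ^ k) : a = b := by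
  have hlim := (tendsto_pow_atTop_nhds_zero_of_lt_one hq₀ hq).const_mul C
  rw [mul_zero] at hlim
  refine dist_le_zero.1 (ge_of_tendsto' hlim fun k => ?_)
  simpa only [(ha.iterate k).eq, (hb.iterate k).eq] using h k

end GeometricConvergence

/-- Ritt–Wavre theorem for bounded domains in ℂⁿ: a holomorphic self-map of a
bounded domain `D ⊆ ℂⁿ` whose image is relatively compact in `D` has a unique
fixed point `z₀`, and its iterates converge uniformly on compact subsets of `D`
to the constant map `z₀`. -/
theorem ritt_wavre_bounded_domain (n : ℕ) (D : Set (Fin n → ℂ))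
    (hDopen : IsOpen D) (hDconn : IsConnected D) (hDbdd : Bornology.IsBounded D)
    (f : (Fin n → ℂ) → (Fin n → ℂ))
    (hf : DifferentiableOn ℂ f D) (hmaps : Set.MapsTo f D D)
    (hcpt : IsCompact (closure (f '' D))) (hsub : closure (f '' D) ⊆ D) :
    ∃ z₀ ∈ D, f z₀ = z₀ ∧ (∀ z ∈ D, f z = z → z = z₀) ∧
      TendstoLocallyUniformlyOn (fun k => f^[k]) (fun _ => z₀) Filter.atTop D := by
  obtain ⟨δ, hδ, hthick⟩ := hcpt.exists_thickening_subset_open hDopen hsub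
  rw [thickening_closure] at hthick
  obtain ⟨r, hr, hdil⟩ := exists_one_lt_forall_mapsTo_dilation
    (hDbdd.subset (image_subset_iff.2 hmaps)) hδ hthick
  have hDM : ∀ c ∈ D, D ⊆ closedBall c (diam D + 1) := fun c hc w hw =>
    (dist_le_diam_of_mem hDbdd hw hc).trans (le_add_of_nonneg_right zero_le_one)
  have hloc := fun z (hz : z ∈ D) => eventually_dist_iterate_le hDopen hf hmaps hdil
    (zero_lt_one.trans hr) (add_pos_of_nonneg_of_pos diam_nonneg zero_lt_one) hDM hz
  have hq₀ : 0 ≤ r⁻¹ := inv_nonneg.2 (zero_le_one.trans hr.le)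
  have hq : r⁻¹ < 1 := inv_lt_one_of_one_lt₀ hr
  have hglob := fun a b (ha : a ∈ D) (hb : b ∈ D) =>
    exists_dist_iterate_le_of_isPreconnected hDconn.isPreconnected hloc ha hb
  obtain ⟨a, ha⟩ := hDconn.nonempty
  obtain ⟨C, hC⟩ := hglob a (f a) ha (hmaps ha)
  obtain ⟨z₀, hz₀K, hlim⟩ := exists_tendsto_iterate_mem_closure_image hq hmaps ha hC
  have hz₀ : z₀ ∈ D := hsub hz₀K
  have hfix : IsFixedPt f z₀ :=
    isFixedPt_of_tendsto_iterate hlim (hf.continuousOn.continuousAt (hDopen.mem_nhds hz₀))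
  refine ⟨z₀, hz₀, hfix, fun z hz hfz => ?_,
    tendstoLocallyUniformlyOn_iterate hq₀ hq hfix hloc fun z hz => hglob z z₀ hz hz₀⟩
  obtain ⟨C', hC'⟩ := hglob z z₀ hz hz₀
  exact IsFixedPt.eq_of_dist_iterate_le hq₀ hq hfz hfix hC'
end

section
/- Let Δ be the open unit disc in ℂ and let f : Δ → Δ be a holomorphic map such that the closure of f(Δ) is a compact subset of Δ. Then f has a unique fixed point z₀ ∈ Δ, and the sequence of iterates f^k converges uniformly on compact subsets of Δ to the constant map z₀. -/
/-!
Since `closure (f '' Δ)` is closed and contained in `Δ`, `f` maps `Δ` into a closed disc of radius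
`r < 1`. Conjugating `f` by disc automorphisms and applying the Schwarz lemma shows that `f`
contracts the pseudo-hyperbolic distance `‖(a - z) / (1 - conj a * z)‖` by the factor
`2r / (1 + r²) < 1`, the pseudo-hyperbolic diameter of that disc. The Euclidean distance is at most
twice the pseudo-hyperbolic one, so the diameter of `f^[k] '' Δ` tends to zero geometrically; by
completeness the orbits converge, uniformly, to a common fixed point.
-/

open Filter Function Metric Set Topology
open scoped ComplexConjugate

/-- The involution of the disc exchanging `a` and `0`; `‖mobius a z‖` is the pseudo-hyperbolic
distance between `a` and `z`. -/
noncomputable def mobius (a z : ℂ) : ℂ := (a - z) / (1 - conj a * z)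

section Mobius

variable {a z : ℂ}

theorem sq_norm_one_sub_conj_mul_sub_sq_norm_sub (a z : ℂ) :
    ‖1 - conj a * z‖ ^ 2 - ‖a - z‖ ^ 2 = (1 - ‖a‖ ^ 2) * (1 - ‖z‖ ^ 2) := by
  simp only [Complex.sq_norm]
  apply Complex.ofReal_injective
  push_cast
  simp only [← Complex.mul_conj, map_sub, map_mul, map_one, Complex.conj_conj]
  ring

theorem one_sub_conj_mul_ne_zero (ha : ‖a‖ < 1) (hz : ‖z‖ ≤ 1) : 1 - conj a * z ≠ 0 := by
  refine sub_ne_zero.2 fun h => ?_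
  have : ‖conj a * z‖ < 1 := by
    rw [norm_mul, Complex.norm_conj]
    nlinarith [norm_nonneg a, norm_nonneg z]
  simp [← h] at this

theorem norm_one_sub_conj_mul_le (a z : ℂ) : ‖1 - conj a * z‖ ≤ 1 + ‖a‖ * ‖z‖ := by
  simpa [norm_mul, Complex.norm_conj] using norm_sub_le (1 : ℂ) (conj a * z)

theorem two_mul_div_one_add_sq_lt_one {r : ℝ} (hr : r < 1) : 2 * r / (1 + r ^ 2) < 1 := by
  rw [div_lt_one (by positivity)]
  nlinarith [sq_pos_of_pos (sub_pos.2 hr)]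

theorem norm_mobius_le_of_norm_le {r : ℝ} (ha : ‖a‖ ≤ r) (hz : ‖z‖ ≤ r) (hr : r < 1) :
    ‖mobius a z‖ ≤ 2 * r / (1 + r ^ 2) := by
  have hr0 : 0 ≤ r := (norm_nonneg a).trans ha
  have hden : ‖1 - conj a * z‖ ≤ 1 + r ^ 2 := by
    nlinarith [norm_one_sub_conj_mul_le a z, norm_nonneg a, norm_nonneg z]
  have hkey := sq_norm_one_sub_conj_mul_sub_sq_norm_sub a z
  have hgap : (1 - r ^ 2) ^ 2 ≤ (1 - ‖a‖ ^ 2) * (1 - ‖z‖ ^ 2) := by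
    have h1 : 1 - r ^ 2 ≤ 1 - ‖a‖ ^ 2 := by nlinarith [norm_nonneg a]
    have h2 : 1 - r ^ 2 ≤ 1 - ‖z‖ ^ 2 := by nlinarith [norm_nonneg z]
    simpa only [sq] using mul_le_mul h1 h2 (by nlinarith) (by nlinarith [norm_nonneg a])
  have hD : 0 < ‖1 - conj a * z‖ :=
    norm_pos_iff.2 (one_sub_conj_mul_ne_zero (ha.trans_lt hr) (hz.trans hr.le))
  rw [mobius, norm_div, div_le_div_iff₀ hD (by positivity)]
  refine (pow_le_pow_iff_left₀ (by positivity) (by positivity) two_ne_zero).1 ?_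
  have hN : ‖1 - conj a * z‖ ^ 2 ≤ (1 + r ^ 2) ^ 2 := pow_le_pow_left₀ (norm_nonneg _) hden 2
  have hA : ‖a - z‖ ^ 2 ≤ ‖1 - conj a * z‖ ^ 2 - (1 - r ^ 2) ^ 2 := by linarith
  nlinarith [mul_le_mul_of_nonneg_left hN (sq_nonneg (1 - r ^ 2)),
    mul_le_mul_of_nonneg_left hA (sq_nonneg (1 + r ^ 2))]

theorem norm_mobius_lt_one (ha : ‖a‖ < 1) (hz : ‖z‖ < 1) : ‖mobius a z‖ < 1 :=
  (norm_mobius_le_of_norm_le (le_max_left _ _) (le_max_right _ _) (max_lt ha hz)).trans_lt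
    (two_mul_div_one_add_sq_lt_one (max_lt ha hz))

theorem mapsTo_mobius (ha : ‖a‖ < 1) : MapsTo (mobius a) (ball 0 1) (ball 0 1) := fun _ hz =>
  mem_ball_zero_iff.2 (norm_mobius_lt_one ha (mem_ball_zero_iff.1 hz))

theorem differentiableOn_mobius (ha : ‖a‖ < 1) : DifferentiableOn ℂ (mobius a) (ball 0 1) :=
  DifferentiableOn.div (by fun_prop) (by fun_prop) fun _ hz =>
    one_sub_conj_mul_ne_zero ha (mem_ball_zero_iff.1 hz).le

@[simp]
theorem mobius_self (a : ℂ) : mobius a a = 0 := by simp [mobius]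

@[simp]
theorem mobius_zero_right (a : ℂ) : mobius a 0 = a := by simp [mobius]

theorem mobius_mobius (ha : ‖a‖ < 1) (hz : ‖z‖ < 1) : mobius a (mobius a z) = z := by
  have hD := one_sub_conj_mul_ne_zero ha hz.le
  have haa := one_sub_conj_mul_ne_zero ha ha.le
  have hnum : a - mobius a z = z * (1 - conj a * a) / (1 - conj a * z) := by
    rw [mobius, eq_div_iff hD, sub_mul, div_mul_cancel₀ _ hD]
    ring
  have hden : 1 - conj a * mobius a z = (1 - conj a * a) / (1 - conj a * z) := by
    rw [mobius, eq_div_iff hD, sub_mul, mul_assoc, div_mul_cancel₀ _ hD]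
    ring
  rw [mobius, hnum, hden, div_div_div_cancel_right₀ hD, mul_div_cancel_right₀ _ haa]

theorem norm_sub_le_two_mul_norm_mobius (ha : ‖a‖ < 1) (hz : ‖z‖ ≤ 1) :
    ‖a - z‖ ≤ 2 * ‖mobius a z‖ := by
  have hden : ‖1 - conj a * z‖ ≤ 2 := by
    nlinarith [norm_one_sub_conj_mul_le a z, norm_nonneg a, norm_nonneg z]
  have hD : ‖1 - conj a * z‖ ≠ 0 := norm_ne_zero_iff.2 (one_sub_conj_mul_ne_zero ha hz)
  calc ‖a - z‖ = ‖mobius a z‖ * ‖1 - conj a * z‖ := by rw [mobius, norm_div, div_mul_cancel₀ _ hD]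
    _ ≤ 2 * ‖mobius a z‖ := by nlinarith [norm_nonneg (mobius a z)]

end Mobius

section

variable {X : Type*} [MetricSpace X] {f : X → X} {s : Set X} {ε : ℕ → ℝ}

theorem tendstoUniformlyOn_iterate_of_isFixedPt (hε : Tendsto ε atTop (𝓝 0))
    (hdist : ∀ k, ∀ z ∈ s, ∀ w ∈ s, dist (f^[k] z) (f^[k] w) ≤ ε k)
    {z₀ : X} (hz₀ : z₀ ∈ s) (hfix : IsFixedPt f z₀) :
    TendstoUniformlyOn (fun k => f^[k]) (fun _ => z₀) atTop s := by
  refine Metric.tendstoUniformlyOn_iff.2 fun δ hδ => ?_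
  filter_upwards [hε.eventually (gt_mem_nhds hδ)] with k hk z hz
  calc dist z₀ (f^[k] z) = dist (f^[k] z₀) (f^[k] z) := by rw [(hfix.iterate k).eq]
    _ ≤ ε k := hdist k z₀ hz₀ z hz
    _ < δ := hk

theorem cauchySeq_iterate_of_dist_iterate_le (hmaps : MapsTo f s s) (hε : Tendsto ε atTop (𝓝 0))
    (hdist : ∀ k, ∀ z ∈ s, ∀ w ∈ s, dist (f^[k] z) (f^[k] w) ≤ ε k) {x : X} (hx : x ∈ s) :
    CauchySeq fun n => f^[n] x := by
  refine cauchySeq_of_le_tendsto_0 ε (fun n m N hn hm => ?_) hε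
  obtain ⟨i, rfl⟩ := Nat.exists_eq_add_of_le hn
  obtain ⟨j, rfl⟩ := Nat.exists_eq_add_of_le hm
  rw [iterate_add_apply, iterate_add_apply]
  exact hdist N _ (hmaps.iterate i hx) _ (hmaps.iterate j hx)

theorem exists_isFixedPt_tendstoUniformlyOn_iterate [CompleteSpace X] (hf : ContinuousOn f s)
    (hsub : closure (f '' s) ⊆ s) (hs : s.Nonempty) (hε : Tendsto ε atTop (𝓝 0))
    (hdist : ∀ k, ∀ z ∈ s, ∀ w ∈ s, dist (f^[k] z) (f^[k] w) ≤ ε k) :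
    ∃ z₀ ∈ s, IsFixedPt f z₀ ∧ (∀ z ∈ s, IsFixedPt f z → z = z₀) ∧
      TendstoUniformlyOn (fun k => f^[k]) (fun _ => z₀) atTop s := by
  have hmaps : MapsTo f s s := fun z hz => hsub (subset_closure (mem_image_of_mem f hz))
  obtain ⟨x, hx⟩ := hs
  obtain ⟨z₀, hlim⟩ :=
    cauchySeq_tendsto_of_complete (cauchySeq_iterate_of_dist_iterate_le hmaps hε hdist hx)
  have hz₀ : z₀ ∈ s := by
    refine hsub (mem_closure_of_tendsto ((tendsto_add_atTop_iff_nat 1).2 hlim) ?_)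
    exact Eventually.of_forall fun n => by
      rw [iterate_succ_apply']; exact mem_image_of_mem f (hmaps.iterate n hx)
  have hfix : IsFixedPt f z₀ := by
    have horbit : Tendsto (fun n => f^[n] x) atTop (𝓝[s] z₀) :=
      tendsto_nhdsWithin_iff.2 ⟨hlim, Eventually.of_forall fun n => hmaps.iterate n hx⟩
    refine tendsto_nhds_unique ((hf z₀ hz₀).tendsto.comp horbit) ?_
    simpa only [iterate_succ_apply', comp_def] using (tendsto_add_atTop_iff_nat 1).2 hlim
  have hunif := tendstoUniformlyOn_iterate_of_isFixedPt hε hdist hz₀ hfix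
  refine ⟨z₀, hz₀, hfix, fun z hz hfz => ?_, hunif⟩
  refine tendsto_nhds_unique ?_ (hunif.tendsto_at hz)
  simp only [hfz.iterate _ |>.eq]
  exact tendsto_const_nhds

end

section SelfMap

variable {f : ℂ → ℂ} {r : ℝ}

/-- Schwarz lemma for `mobius (f w) ∘ f ∘ mobius w`, which fixes `0` and maps `Δ` into the closed
disc of radius `2r / (1 + r²)`. -/
theorem norm_mobius_apply_le (hf : DifferentiableOn ℂ f (ball 0 1))
    (hmaps : MapsTo f (ball 0 1) (closedBall 0 r)) (hr : r < 1) {z w : ℂ}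
    (hz : z ∈ ball (0 : ℂ) 1) (hw : w ∈ ball (0 : ℂ) 1) :
    ‖mobius (f w) (f z)‖ ≤ 2 * r / (1 + r ^ 2) * ‖mobius w z‖ := by
  have hw1 : ‖w‖ < 1 := mem_ball_zero_iff.1 hw
  have hfw : ‖f w‖ ≤ r := mem_closedBall_zero_iff.1 (hmaps hw)
  set F : ℂ → ℂ := mobius (f w) ∘ f ∘ mobius w
  have hF0 : F 0 = 0 := by simp [F]
  have hmaps' : MapsTo (f ∘ mobius w) (ball 0 1) (closedBall 0 r) :=
    hmaps.comp (mapsTo_mobius hw1)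
  have hFd : DifferentiableOn ℂ F (ball 0 1) :=
    (differentiableOn_mobius (hfw.trans_lt hr)).comp
      (hf.comp (differentiableOn_mobius hw1) (mapsTo_mobius hw1))
      (hmaps'.mono_right (closedBall_subset_ball hr))
  have hFmaps : MapsTo F (ball 0 1) (closedBall (F 0) (2 * r / (1 + r ^ 2))) := fun ζ hζ => by
    rw [hF0, mem_closedBall_zero_iff]
    exact norm_mobius_le_of_norm_le hfw (mem_closedBall_zero_iff.1 (hmaps' hζ)) hr
  have hschwarz := Complex.dist_le_div_mul_dist_of_mapsTo_ball hFd hFmaps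
    (mapsTo_mobius hw1 hz)
  simpa [F, hF0, mobius_mobius hw1 (mem_ball_zero_iff.1 hz)] using hschwarz

theorem dist_iterate_le_of_mapsTo_closedBall (hf : DifferentiableOn ℂ f (ball 0 1))
    (hmaps : MapsTo f (ball 0 1) (closedBall 0 r)) (hr : r < 1) (k : ℕ) {z w : ℂ}
    (hz : z ∈ ball (0 : ℂ) 1) (hw : w ∈ ball (0 : ℂ) 1) :
    dist (f^[k] z) (f^[k] w) ≤ 2 * (2 * r / (1 + r ^ 2)) ^ k := by
  have hself : MapsTo f (ball 0 1) (ball 0 1) := hmaps.mono_right (closedBall_subset_ball hr)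
  have hr0 : 0 ≤ r := (norm_nonneg _).trans (mem_closedBall_zero_iff.1 (hmaps hz))
  have hcontract :
      ∀ k, ‖mobius (f^[k] w) (f^[k] z)‖ ≤ (2 * r / (1 + r ^ 2)) ^ k * ‖mobius w z‖ := by
    intro k
    induction k with
    | zero => simp
    | succ k ih =>
      rw [iterate_succ_apply', iterate_succ_apply', pow_succ', mul_assoc]
      exact (norm_mobius_apply_le hf hmaps hr (hself.iterate k hz) (hself.iterate k hw)).trans
        (mul_le_mul_of_nonneg_left ih (by positivity))
  have hw1 : ‖f^[k] w‖ < 1 := mem_ball_zero_iff.1 (hself.iterate k hw)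
  have hz1 : ‖f^[k] z‖ ≤ 1 := (mem_ball_zero_iff.1 (hself.iterate k hz)).le
  have hρ : ‖mobius w z‖ ≤ 1 :=
    (norm_mobius_lt_one (mem_ball_zero_iff.1 hw) (mem_ball_zero_iff.1 hz)).le
  calc dist (f^[k] z) (f^[k] w) = ‖f^[k] w - f^[k] z‖ := by rw [dist_comm, Complex.dist_eq]
    _ ≤ 2 * ‖mobius (f^[k] w) (f^[k] z)‖ := norm_sub_le_two_mul_norm_mobius hw1 hz1
    _ ≤ 2 * ((2 * r / (1 + r ^ 2)) ^ k * ‖mobius w z‖) := by gcongr; exact hcontract k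
    _ ≤ 2 * (2 * r / (1 + r ^ 2)) ^ k := by
      gcongr; exact mul_le_of_le_one_right (by positivity) hρ

end SelfMap

theorem ritt_unit_disc_general (f : ℂ → ℂ)
    (hf : DifferentiableOn ℂ f (Metric.ball (0 : ℂ) 1))
    (hsub : closure (f '' Metric.ball (0 : ℂ) 1) ⊆ Metric.ball (0 : ℂ) 1) :
    ∃ z₀ ∈ Metric.ball (0 : ℂ) 1, f z₀ = z₀ ∧
      (∀ z ∈ Metric.ball (0 : ℂ) 1, f z = z → z = z₀) ∧
      TendstoLocallyUniformlyOn (fun k => f^[k]) (fun _ => z₀) Filter.atTop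
        (Metric.ball (0 : ℂ) 1) := by
  obtain ⟨r, hr, hsubr⟩ := exists_lt_subset_ball isClosed_closure hsub
  have hmaps : MapsTo f (ball 0 1) (closedBall 0 r) := fun z hz =>
    ball_subset_closedBall (hsubr (subset_closure (mem_image_of_mem f hz)))
  have hr0 : 0 ≤ r :=
    (norm_nonneg _).trans (mem_closedBall_zero_iff.1 (hmaps (mem_ball_self one_pos)))
  have hε : Tendsto (fun k => 2 * (2 * r / (1 + r ^ 2)) ^ k) atTop (𝓝 0) := by
    simpa using (tendsto_pow_atTop_nhds_zero_of_lt_one (by positivity)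
      (two_mul_div_one_add_sq_lt_one hr)).const_mul 2
  obtain ⟨z₀, hz₀, hfix, huniq, hunif⟩ := exists_isFixedPt_tendstoUniformlyOn_iterate
    hf.continuousOn hsub ⟨0, mem_ball_self one_pos⟩ hε
    fun k _ hz _ hw => dist_iterate_le_of_mapsTo_closedBall hf hmaps hr k hz hw
  exact ⟨z₀, hz₀, hfix, huniq, hunif.tendstoLocallyUniformlyOn⟩

/-- Ritt's theorem for the unit disc: a holomorphic self-map of the unit disc
`Δ ⊆ ℂ` whose image is relatively compact in `Δ` has a unique fixed point `z₀`,
and its iterates converge uniformly on compact subsets of `Δ` to the constant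
map `z₀`. -/
theorem ritt_unit_disc (f : ℂ → ℂ)
    (hf : DifferentiableOn ℂ f (Metric.ball (0 : ℂ) 1))
    (hmaps : Set.MapsTo f (Metric.ball (0 : ℂ) 1) (Metric.ball (0 : ℂ) 1))
    (hcpt : IsCompact (closure (f '' Metric.ball (0 : ℂ) 1)))
    (hsub : closure (f '' Metric.ball (0 : ℂ) 1) ⊆ Metric.ball (0 : ℂ) 1) :
    ∃ z₀ ∈ Metric.ball (0 : ℂ) 1, f z₀ = z₀ ∧
      (∀ z ∈ Metric.ball (0 : ℂ) 1, f z = z → z = z₀) ∧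
      TendstoLocallyUniformlyOn (fun k => f^[k]) (fun _ => z₀) Filter.atTop
        (Metric.ball (0 : ℂ) 1) :=
  ritt_unit_disc_general f hf hsub
end

section
/- Let D ⊂ ℂⁿ be a bounded domain and let f : D → D be a holomorphic map such that the closure of f(D) is a compact subset of D, and let z₀ ∈ D be its unique fixed point. Then the linear map id − df_{z₀} : ℂⁿ → ℂⁿ is invertible. -/
/-!
Replace `f` by `g = z₀ + c • (f - z₀)` with `1 < ‖c‖` and `c` close to `1`: since `f(D)` has
compact closure inside `D`, `g` still maps `D` into `D`. The Cauchy estimates on a ball around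
`z₀`, applied to the iterates of `g`, bound `‖(dg_{z₀})ᵏ‖` uniformly in `k`, so every eigenvalue
of `dg_{z₀} = c • df_{z₀}` has norm at most `1`, and every eigenvalue of `df_{z₀}` has norm less
than `1`. Hence `1` is not an eigenvalue of `df_{z₀}`, and `id - df_{z₀}` is injective, hence
bijective in finite dimension.
-/

open Set Metric Function

theorem norm_le_one_of_apply_eq_smul_of_forall_norm_pow_le {𝕜 E : Type*} [NontriviallyNormedField 𝕜]
    [NormedAddCommGroup E] [NormedSpace 𝕜 E] {L : E →L[𝕜] E} {C : ℝ}
    (hC : ∀ k : ℕ, ‖L ^ k‖ ≤ C) {v : E} (hv : v ≠ 0) {μ : 𝕜} (hLv : L v = μ • v) :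
    ‖μ‖ ≤ 1 := by
  by_contra! hμ
  have hpow (k : ℕ) : (L ^ k) v = μ ^ k • v := by
    induction k with
    | zero => simp
    | succ k ih => rw [pow_succ', mul_apply_eq_comp, ih, map_smul, hLv, smul_smul, ← pow_succ]
  obtain ⟨k, hk⟩ := pow_unbounded_of_one_lt C hμ
  have hvpos : 0 < ‖v‖ := norm_pos_iff.mpr hv
  have hbound := (L ^ k).le_of_opNorm_le (hC k) v
  rw [hpow, norm_smul, norm_pow] at hbound
  nlinarith

variable {E : Type*} [NormedAddCommGroup E] [NormedSpace ℂ E]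

theorem exists_forall_norm_fderiv_pow_le {D : Set E} {g : E → E} {z₀ : E}
    (hD : IsOpen D) (hDb : Bornology.IsBounded D) (hg : DifferentiableOn ℂ g D)
    (hgD : MapsTo g D D) (hz₀ : z₀ ∈ D) (hfix : g z₀ = z₀) :
    ∃ C, ∀ k : ℕ, ‖fderiv ℂ g z₀ ^ k‖ ≤ C := by
  obtain ⟨r, hr, hrD⟩ := isOpen_iff.mp hD z₀ hz₀
  obtain ⟨R, hR⟩ := hDb.subset_ball z₀
  refine ⟨R / r, fun k => ?_⟩
  have hgz₀ : HasFDerivAt g (fderiv ℂ g z₀) z₀ :=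
    (hg.differentiableAt (hD.mem_nhds hz₀)).hasFDerivAt
  rw [← (hgz₀.iterate hfix k).fderiv]
  refine Complex.norm_fderiv_le_div_of_mapsTo_ball ((hg.iterate hgD k).mono hrD) ?_ hr
  rw [iterate_fixed hfix k]
  exact ((hgD.iterate k).mono_left hrD).mono_right (hR.trans ball_subset_closedBall)

theorem norm_le_one_of_fderiv_apply_eq_smul {D : Set E} {g : E → E} {z₀ : E}
    (hD : IsOpen D) (hDb : Bornology.IsBounded D) (hg : DifferentiableOn ℂ g D)
    (hgD : MapsTo g D D) (hz₀ : z₀ ∈ D) (hfix : g z₀ = z₀) {v : E} (hv : v ≠ 0) {μ : ℂ}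
    (hgv : fderiv ℂ g z₀ v = μ • v) : ‖μ‖ ≤ 1 :=
  have ⟨_, hC⟩ := exists_forall_norm_fderiv_pow_le hD hDb hg hgD hz₀ hfix
  norm_le_one_of_apply_eq_smul_of_forall_norm_pow_le hC hv hgv

theorem exists_one_lt_norm_mapsTo_add_smul_sub {D K : Set E} {f : E → E}
    (hD : IsOpen D) (hK : IsCompact K) (hKD : K ⊆ D) (hfK : MapsTo f D K) (z₀ : E) :
    ∃ c : ℂ, 1 < ‖c‖ ∧ MapsTo (fun z => z₀ + c • (f z - z₀)) D D := by
  obtain ⟨ε, hε, hεD⟩ := hK.exists_thickening_subset_open hD hKD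
  obtain ⟨R, hR, hKR⟩ := hK.isBounded.subset_ball_lt 0 z₀
  have hεR : 0 < ε / R := div_pos hε hR
  refine ⟨1 + (ε / R : ℝ), ?_, fun z hz => hεD ?_⟩
  · rw [← Complex.ofReal_one, ← Complex.ofReal_add, Complex.norm_of_nonneg (by positivity)]
    linarith
  · refine ball_subset_thickening (hfK hz) ε ?_
    have hfz : ‖f z - z₀‖ < R := by simpa [dist_eq_norm] using hKR (hfK hz)
    have hdiff : z₀ + (1 + (ε / R : ℝ) : ℂ) • (f z - z₀) - f z = (ε / R : ℝ) • (f z - z₀) := by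
      rw [← Complex.coe_smul]; module
    rw [mem_ball, dist_eq_norm, hdiff, norm_smul, Real.norm_of_nonneg hεR.le]
    calc ε / R * ‖f z - z₀‖ < ε / R * R := by gcongr
      _ = ε := div_mul_cancel₀ ε hR.ne'

theorem norm_lt_one_of_fderiv_apply_eq_smul {D K : Set E} {f : E → E} {z₀ : E}
    (hD : IsOpen D) (hDb : Bornology.IsBounded D) (hf : DifferentiableOn ℂ f D)
    (hK : IsCompact K) (hKD : K ⊆ D) (hfK : MapsTo f D K) (hz₀ : z₀ ∈ D) (hfix : f z₀ = z₀)
    {v : E} (hv : v ≠ 0) {μ : ℂ} (hfv : fderiv ℂ f z₀ v = μ • v) : ‖μ‖ < 1 := by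
  obtain ⟨c, hc, hgD⟩ := exists_one_lt_norm_mapsTo_add_smul_sub hD hK hKD hfK z₀
  set g := fun z => z₀ + c • (f z - z₀)
  have hg : DifferentiableOn ℂ g D := ((hf.sub_const z₀).const_smul c).const_add z₀
  have hgz₀ : HasFDerivAt g (c • fderiv ℂ f z₀) z₀ :=
    (((hf.differentiableAt (hD.mem_nhds hz₀)).hasFDerivAt.sub_const z₀).const_smul c).const_add z₀
  have hgv : fderiv ℂ g z₀ v = (c * μ) • v := by
    rw [hgz₀.fderiv, smul_apply, hfv, smul_smul]
  have hcμ := norm_le_one_of_fderiv_apply_eq_smul hD hDb hg hgD hz₀ (by simp [g, hfix]) hv hgv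
  rw [norm_mul] at hcμ
  nlinarith [norm_nonneg μ]

theorem id_sub_differential_invertible_general (n : ℕ) (D : Set (Fin n → ℂ))
    (hDopen : IsOpen D) (hDbdd : Bornology.IsBounded D)
    (f : (Fin n → ℂ) → (Fin n → ℂ))
    (hf : DifferentiableOn ℂ f D)
    (hcpt : IsCompact (closure (f '' D))) (hsub : closure (f '' D) ⊆ D)
    (z₀ : Fin n → ℂ) (hz₀ : z₀ ∈ D) (hfix : f z₀ = z₀) :
    Function.Bijective
      (ContinuousLinearMap.id ℂ (Fin n → ℂ) - fderiv ℂ f z₀) := by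
  have hinj : Injective (ContinuousLinearMap.id ℂ (Fin n → ℂ) - fderiv ℂ f z₀) := by
    refine (injective_iff_map_eq_zero _).mpr fun v hv => ?_
    by_contra hv0
    have hfv : fderiv ℂ f z₀ v = (1 : ℂ) • v := by
      rw [one_smul]; exact (sub_eq_zero.mp hv).symm
    have hlt := norm_lt_one_of_fderiv_apply_eq_smul hDopen hDbdd hf hcpt hsub
      (fun z hz => subset_closure (mem_image_of_mem f hz)) hz₀ hfix hv0 hfv
    simp at hlt
  exact ⟨hinj, LinearMap.injective_iff_surjective.mp hinj⟩

/-- If `f` is a holomorphic self-map of a bounded domain `D ⊆ ℂⁿ` with relatively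
compact image and `z₀ ∈ D` is its (unique) fixed point, then `id − df_{z₀}` is an
invertible linear map of ℂⁿ. -/
theorem id_sub_differential_invertible (n : ℕ) (D : Set (Fin n → ℂ))
    (hDopen : IsOpen D) (hDconn : IsConnected D) (hDbdd : Bornology.IsBounded D)
    (f : (Fin n → ℂ) → (Fin n → ℂ))
    (hf : DifferentiableOn ℂ f D) (hmaps : Set.MapsTo f D D)
    (hcpt : IsCompact (closure (f '' D))) (hsub : closure (f '' D) ⊆ D)
    (z₀ : Fin n → ℂ) (hz₀ : z₀ ∈ D) (hfix : f z₀ = z₀)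
    (huniq : ∀ z ∈ D, f z = z → z = z₀) :
    Function.Bijective
      (ContinuousLinearMap.id ℂ (Fin n → ℂ) - fderiv ℂ f z₀) :=
  id_sub_differential_invertible_general n D hDopen hDbdd f hf hcpt hsub z₀ hz₀ hfix
end

section
/- Let D ⊂ ℂⁿ be a bounded domain and f : D → D a holomorphic map such that the closure of f(D) is a compact subset of D. Let (k_ν) be a strictly increasing sequence of positive integers with p_ν := k_{ν+1} − k_ν → +∞ and q_ν := p_ν − k_ν → +∞ (with q_ν ≥ 0 for all ν), and suppose that f^{k_ν} → h, f^{p_ν} → ρ, and f^{q_ν} → g uniformly on compact subsets of D, where h, ρ, g : D → D are holomorphic. Then h ∘ ρ = h = ρ ∘ h, g ∘ h = ρ = h ∘ g, and ρ ∘ ρ = ρ, so ρ is a holomorphic retraction of D. -/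
/-- Key intermediate step in the proof of Ritt's theorem: if `f^{k_ν} → h`,
`f^{p_ν} → ρ` and `f^{q_ν} → g` locally uniformly on `D`, where
`p_ν = k_{ν+1} − k_ν → ∞` and `q_ν = p_ν − k_ν → ∞`, then
`h ∘ ρ = h = ρ ∘ h`, `g ∘ h = ρ = h ∘ g` and `ρ ∘ ρ = ρ`, i.e. `ρ` is a
holomorphic retraction of `D`. -/
theorem iterates_limit_retraction (n : ℕ) (D : Set (Fin n → ℂ))
    (hDopen : IsOpen D) (hDconn : IsConnected D) (hDbdd : Bornology.IsBounded D)
    (f : (Fin n → ℂ) → (Fin n → ℂ))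
    (hf : DifferentiableOn ℂ f D) (hmaps : Set.MapsTo f D D)
    (hcpt : IsCompact (closure (f '' D))) (hsub : closure (f '' D) ⊆ D)
    (k p q : ℕ → ℕ) (hk : StrictMono k) (hkpos : ∀ ν, 0 < k ν)
    (hp : ∀ ν, p ν = k (ν + 1) - k ν) (hq : ∀ ν, q ν = p ν - k ν)
    (hqnonneg : ∀ ν, k ν ≤ p ν)
    (hptop : Filter.Tendsto p Filter.atTop Filter.atTop)
    (hqtop : Filter.Tendsto q Filter.atTop Filter.atTop)
    (h ρ g : (Fin n → ℂ) → (Fin n → ℂ))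
    (hh : DifferentiableOn ℂ h D) (hhmaps : Set.MapsTo h D D)
    (hρ : DifferentiableOn ℂ ρ D) (hρmaps : Set.MapsTo ρ D D)
    (hg : DifferentiableOn ℂ g D) (hgmaps : Set.MapsTo g D D)
    (hconvh : TendstoLocallyUniformlyOn (fun ν => f^[k ν]) h Filter.atTop D)
    (hconvρ : TendstoLocallyUniformlyOn (fun ν => f^[p ν]) ρ Filter.atTop D)
    (hconvg : TendstoLocallyUniformlyOn (fun ν => f^[q ν]) g Filter.atTop D) :
    Set.EqOn (h ∘ ρ) h D ∧ Set.EqOn (ρ ∘ h) h D ∧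
      Set.EqOn (g ∘ h) ρ D ∧ Set.EqOn (h ∘ g) ρ D ∧
      Set.EqOn (ρ ∘ ρ) ρ D := by
  -- arithmetic identities
  have hkp : ∀ ν, k (ν + 1) = p ν + k ν := by
    intro ν
    have h1 := (hk (by omega : ν < ν + 1)).le
    have h2 := hp ν
    omega
  have hpq : ∀ ν, p ν = q ν + k ν := by
    intro ν
    have := hqnonneg ν
    have := hq ν
    omega
  have hmem : ∀ (m : ℕ) {x}, x ∈ D → f^[m] x ∈ D := fun m _ hx =>
    hmaps.iterate m hx
  -- generic composition-limit lemma
  have key : ∀ (a b : ℕ → ℕ) (u v : (Fin n → ℂ) → (Fin n → ℂ)),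
      TendstoLocallyUniformlyOn (fun ν => f^[a ν]) u Filter.atTop D →
      TendstoLocallyUniformlyOn (fun ν => f^[b ν]) v Filter.atTop D →
      ContinuousOn u D → Set.MapsTo v D D →
      ∀ x ∈ D, Filter.Tendsto (fun ν => f^[a ν + b ν] x) Filter.atTop
        (nhds (u (v x))) := by
    intro a b u v hua hvb hucont hvmaps x hx
    have htend : Filter.Tendsto (fun ν => f^[b ν] x) Filter.atTop
        (nhdsWithin (v x) D) := by
      refine tendsto_nhdsWithin_of_tendsto_nhds_of_eventually_within _
        (hvb.tendsto_at hx) ?_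
      exact Filter.Eventually.of_forall fun ν => hmem (b ν) hx
    have := hua.tendsto_comp (hucont.continuousWithinAt (hvmaps hx))
      (hvmaps hx) htend
    simpa [Function.iterate_add_apply] using this
  -- ρ ∘ h = h
  have hρh : Set.EqOn (ρ ∘ h) h D := by
    intro x hx
    have h1 := key p k ρ h hconvρ hconvh hρ.continuousOn hhmaps x hx
    have h2 : Filter.Tendsto (fun ν => f^[p ν + k ν] x) Filter.atTop
        (nhds (h x)) := by
      have := (hconvh.tendsto_at hx).comp (Filter.tendsto_add_atTop_nat 1)
      simpa [Function.comp_def, hkp] using this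
    exact tendsto_nhds_unique h1 h2
  -- h ∘ ρ = h
  have hhρ : Set.EqOn (h ∘ ρ) h D := by
    intro x hx
    have h1 := key k p h ρ hconvh hconvρ hh.continuousOn hρmaps x hx
    have h2 : Filter.Tendsto (fun ν => f^[k ν + p ν] x) Filter.atTop
        (nhds (h x)) := by
      have := (hconvh.tendsto_at hx).comp (Filter.tendsto_add_atTop_nat 1)
      simpa [Function.comp_def, hkp, Nat.add_comm] using this
    exact tendsto_nhds_unique h1 h2
  -- g ∘ h = ρ
  have hgh : Set.EqOn (g ∘ h) ρ D := by
    intro x hx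
    have h1 := key q k g h hconvg hconvh hg.continuousOn hhmaps x hx
    have h2 : Filter.Tendsto (fun ν => f^[q ν + k ν] x) Filter.atTop
        (nhds (ρ x)) := by
      have := hconvρ.tendsto_at hx
      simpa [hpq] using this
    exact tendsto_nhds_unique h1 h2
  -- h ∘ g = ρ
  have hhg : Set.EqOn (h ∘ g) ρ D := by
    intro x hx
    have h1 := key k q h g hconvh hconvg hh.continuousOn hgmaps x hx
    have h2 : Filter.Tendsto (fun ν => f^[k ν + q ν] x) Filter.atTop
        (nhds (ρ x)) := by
      have := hconvρ.tendsto_at hx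
      simpa [hpq, Nat.add_comm] using this
    exact tendsto_nhds_unique h1 h2
  refine ⟨hhρ, hρh, hgh, hhg, ?_⟩
  intro x hx
  calc ρ (ρ x) = g (h (ρ x)) := (hgh (hρmaps hx)).symm
    _ = g (h x) := congrArg g (hhρ hx)
    _ = ρ x := hgh hx
end

section
/- Let D ⊂ ℂⁿ be a domain (a nonempty connected open subset of ℂⁿ) and let ρ : D → D be a holomorphic retraction, i.e., ρ ∘ ρ = ρ, such that the closure of ρ(D) is a compact subset of D. Then ρ is a constant map. -/
/-- A holomorphic retraction of a domain `D ⊆ ℂⁿ` with relatively compact image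
is constant. -/
theorem retraction_relatively_compact_image_constant (n : ℕ)
    (D : Set (Fin n → ℂ)) (hDopen : IsOpen D) (hDconn : IsConnected D)
    (ρ : (Fin n → ℂ) → (Fin n → ℂ))
    (hρ : DifferentiableOn ℂ ρ D) (hmaps : Set.MapsTo ρ D D)
    (hretr : Set.EqOn (ρ ∘ ρ) ρ D)
    (hcpt : IsCompact (closure (ρ '' D))) (hsub : closure (ρ '' D) ⊆ D) :
    ∃ c, ∀ z ∈ D, ρ z = c := by
  set K := closure (ρ '' D) with hK
  obtain ⟨z₀, hz₀⟩ := hDconn.nonempty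
  have hKne : K.Nonempty := ⟨ρ z₀, subset_closure ⟨z₀, hz₀, rfl⟩⟩
  -- each coordinate is constant on D
  have hcoord : ∀ i : Fin n, ∃ c : ℂ, ∀ z ∈ D, ρ z i = c := by
    intro i
    have hdi : DifferentiableOn ℂ (fun z => ρ z i) D := differentiableOn_pi.mp hρ i
    have hcont : ContinuousOn (fun w => ‖ρ w i‖) K :=
      ((hdi.continuousOn.mono hsub).norm)
    obtain ⟨w₀, hw₀K, hmax⟩ := hcpt.exists_isMaxOn hKne hcont
    have hw₀D : w₀ ∈ D := hsub hw₀K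
    have hmaxD : IsMaxOn (norm ∘ fun z => ρ z i) D w₀ := by
      intro z hz
      have h1 : ρ z i = ρ (ρ z) i := by
        have := hretr hz
        simp only [Function.comp] at this
        rw [this]
      have h2 : ρ z ∈ K := subset_closure ⟨z, hz, rfl⟩
      calc ‖ρ z i‖ = ‖ρ (ρ z) i‖ := by rw [← h1]
        _ ≤ ‖ρ w₀ i‖ := hmax h2
    have := Complex.eqOn_of_isPreconnected_of_isMaxOn_norm hDconn.isPreconnected
      hDopen hdi hw₀D hmaxD
    exact ⟨ρ w₀ i, fun z hz => this hz⟩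
  choose c hc using hcoord
  exact ⟨c, fun z hz => funext fun i => hc i z hz⟩
end

section
/- Let D ⊂ ℂⁿ be a bounded domain. Let f_k, f : D → D be holomorphic maps whose images are relatively compact in D, and suppose f_k → f uniformly on compact subsets of D. Then τ(f_k) → τ(f), where τ(g) denotes the unique fixed point of a holomorphic self-map g of D with relatively compact image. In other words, the Heins map τ : Hol_c(D,D) → D is continuous. -/
/-!
Let `w = τ(g)` and `A = Dg(w)`. Because `g(D)` is relatively compact, the expanded map
`w + c (g - w)` still maps `D` into itself for some `|c| > 1`, and the Cauchy estimates for its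
iterates on a ball `B(w, s) ⊆ D` give `|c|^m ‖A^m‖ ≤ diam D / s`. Hence `A^m → 0`, and some
iterate `g^m` contracts a small closed ball `B` around `w` by the factor `1/2`. For large `k`,
`f_k^m` is uniformly close to `g^m` on `B`, so it maps `B` into itself. The iterates of a
holomorphic self-map of a bounded domain are equicontinuous, so the basin of attraction of
`τ(f_k)` is open and closed in the connected set `D`: the orbit of `w` converges to `τ(f_k)`,
which therefore lies in `B`, and then `|τ(f_k) - w| ≤ 2 sup_B |f_k^m - g^m|`.
-/

open Metric Set Function Filter Topology Uniformity Bornology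

section Dynamics

variable {X : Type*}

theorem Function.IsFixedPt.tendsto_iterate_of_mapClusterPt [UniformSpace X] {u : X → X} {p x : X}
    (hp : IsFixedPt u p) (hstable : EquicontinuousAt (fun j => u^[j]) p)
    (hx : MapClusterPt p atTop fun j => u^[j] x) :
    Tendsto (fun j => u^[j] x) atTop (𝓝 p) := by
  refine Uniform.tendsto_nhds_right.2 fun U hU => ?_
  obtain ⟨J, hJ⟩ := (mapClusterPt_iff_frequently.1 hx _ (hstable U hU)).exists
  refine (eventually_ge_atTop J).mono fun j hj => ?_
  obtain ⟨i, rfl⟩ := Nat.exists_eq_add_of_le' hj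
  simpa [iterate_add_apply, (hp.iterate i).eq] using hJ i

theorem eventually_tendsto_iterate_of_eventually_dist_le [PseudoMetricSpace X] {u : X → X} {p : X}
    {q : ℝ} (hq₀ : 0 ≤ q) (hq₁ : q < 1) (hu : ∀ᶠ z in 𝓝 p, dist (u z) p ≤ q * dist z p) :
    ∀ᶠ z in 𝓝 p, Tendsto (fun i => u^[i] z) atTop (𝓝 p) := by
  obtain ⟨r, hr, hrU⟩ := nhds_basis_closedBall.mem_iff.1 hu
  filter_upwards [closedBall_mem_nhds p hr] with z hz
  have hdist : ∀ i, dist (u^[i] z) p ≤ q ^ i * dist z p := by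
    intro i
    induction i with
    | zero => simp
    | succ i ih =>
      have hmem : u^[i] z ∈ closedBall p r := by
        refine mem_closedBall.2 (ih.trans ?_)
        exact (mul_le_of_le_one_left dist_nonneg (pow_le_one₀ hq₀ hq₁.le)).trans hz
      rw [iterate_succ_apply', pow_succ]
      calc dist (u (u^[i] z)) p ≤ q * dist (u^[i] z) p := hrU hmem
        _ ≤ q * (q ^ i * dist z p) := by gcongr
        _ = q ^ i * q * dist z p := by ring
  refine tendsto_iff_dist_tendsto_zero.2 (squeeze_zero (fun _ => dist_nonneg) hdist ?_)
  simpa using (tendsto_pow_atTop_nhds_zero_of_lt_one hq₀ hq₁).mul_const (dist z p)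

theorem IsPreconnected.tendsto_iterate_of_equicontinuousAt [UniformSpace X] {D : Set X}
    (hDo : IsOpen D) (hDc : IsPreconnected D) {u : X → X} {p : X} (hp : p ∈ D)
    (hequi : ∀ x ∈ D, EquicontinuousAt (fun j => u^[j]) x)
    (hattr : ∀ᶠ z in 𝓝 p, Tendsto (fun j => u^[j] z) atTop (𝓝 p)) :
    ∀ x ∈ D, Tendsto (fun j => u^[j] x) atTop (𝓝 p) := by
  set A := {x ∈ D | Tendsto (fun j => u^[j] x) atTop (𝓝 p)}
  have hAo : IsOpen A := by
    refine isOpen_iff_mem_nhds.2 fun x ⟨hxD, hx⟩ => ?_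
    obtain ⟨W, hWattr, hWo, hpW⟩ := eventually_nhds_iff.1 hattr
    obtain ⟨J, hJ⟩ := (hx.eventually (hWo.mem_nhds hpW)).exists
    filter_upwards [hDo.mem_nhds hxD, ((hequi x hxD).continuousAt J).preimage_mem_nhds
      (hWo.mem_nhds hJ)] with y hyD hy
    exact ⟨hyD, (tendsto_add_atTop_iff_nat J).1 (by simpa [iterate_add_apply] using hWattr _ hy)⟩
  have hAc : closure A ∩ D ⊆ A := fun x ⟨hxA, hxD⟩ =>
    ⟨hxD, (hequi x hxD).tendsto_of_mem_closure tendsto_const_nhds (fun _ hy => hy.2) hxA⟩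
  exact fun x hx => (hDc.subset_of_closure_inter_subset hAo ⟨p, hp, hp, hattr.self_of_nhds⟩
    hAc hx).2

theorem Function.IsFixedPt.dist_le_of_tendsto_iterate [PseudoMetricSpace X] {F H : X → X}
    {w z : X} {r q δ : ℝ} (hz : IsFixedPt F z) (horbit : Tendsto (fun i => F^[i] w) atTop (𝓝 z))
    (hH : ∀ x ∈ closedBall w r, dist (H x) w ≤ q * dist x w)
    (hF : ∀ x ∈ closedBall w r, dist (H x) (F x) ≤ δ) (hr : 0 ≤ r) (hq : 0 ≤ q)
    (hδ : δ + q * r ≤ r) :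
    (1 - q) * dist z w ≤ δ := by
  have hmaps : MapsTo F (closedBall w r) (closedBall w r) := fun x hx => by
    have := mem_closedBall.1 hx
    calc dist (F x) w ≤ dist (H x) (F x) + dist (H x) w := dist_triangle_left _ _ _
      _ ≤ δ + q * r := add_le_add (hF x hx) ((hH x hx).trans (by gcongr))
      _ ≤ r := hδ
  have hzr : z ∈ closedBall w r := isClosed_closedBall.mem_of_tendsto horbit
    (Eventually.of_forall fun i => hmaps.iterate i (mem_closedBall_self hr))
  have hFz := hF z hzr
  rw [hz.eq] at hFz
  linarith [hH z hzr, dist_triangle_left z w (H z)]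

end Dynamics

section LocallyUniform

variable {ι α β γ : Type*} [TopologicalSpace α] [UniformSpace β] [UniformSpace γ]
  {p : Filter ι}

theorem IsOpen.tendstoLocallyUniformlyOn_iff_tendsto_prod {F : ι → α → β} {f : α → β}
    {s : Set α} (hs : IsOpen s) (hf : ContinuousOn f s) :
    TendstoLocallyUniformlyOn F f p s ↔
      ∀ x ∈ s, Tendsto (fun q : ι × α => F q.1 q.2) (p ×ˢ 𝓝 x) (𝓝 (f x)) := by
  rw [hs.tendstoLocallyUniformlyOn_iff_forall_tendsto]
  refine forall₂_congr fun x hx => ⟨fun h => ?_, fun h => ?_⟩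
  all_goals have hfx : Tendsto (fun q : ι × α => f q.2) (p ×ˢ 𝓝 x) (𝓝 (f x)) :=
    ((hf.continuousAt (hs.mem_nhds hx)).tendsto).comp tendsto_snd
  · exact Uniform.tendsto_nhds_right.2 ((Uniform.tendsto_nhds_right.1 hfx).uniformity_trans h)
  · exact (hfx.prodMk_nhds h).mono_right (nhds_le_uniformity _)

theorem TendstoLocallyUniformlyOn.comp_of_continuousOn {F : ι → β → γ} {f : β → γ}
    {G : ι → α → β} {g : α → β} {s : Set β} {t : Set α}
    (hF : TendstoLocallyUniformlyOn F f p s) (hG : TendstoLocallyUniformlyOn G g p t)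
    (hf : ContinuousOn f s) (hg : ContinuousOn g t) (hs : IsOpen s) (ht : IsOpen t)
    (hgt : MapsTo g t s) :
    TendstoLocallyUniformlyOn (fun i => F i ∘ G i) (f ∘ g) p t := by
  rw [hs.tendstoLocallyUniformlyOn_iff_tendsto_prod hf] at hF
  rw [ht.tendstoLocallyUniformlyOn_iff_tendsto_prod hg] at hG
  rw [ht.tendstoLocallyUniformlyOn_iff_tendsto_prod (hf.comp hg hgt)]
  exact fun x hx => (hF _ (hgt hx)).comp (tendsto_fst.prodMk (hG x hx))

theorem TendstoLocallyUniformlyOn.iterate {F : ι → β → β} {f : β → β} {s : Set β}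
    (hF : TendstoLocallyUniformlyOn F f p s) (hf : ContinuousOn f s) (hs : IsOpen s)
    (hfs : MapsTo f s s) (m : ℕ) :
    TendstoLocallyUniformlyOn (fun i => (F i)^[m]) f^[m] p s := by
  induction m with
  | zero =>
    exact (hs.tendstoLocallyUniformlyOn_iff_tendsto_prod continuousOn_id).2 fun _ _ => tendsto_snd
  | succ m ih =>
    simpa only [iterate_succ'] using
      hF.comp_of_continuousOn ih hf (hf.iterate hfs m) hs hs (hfs.iterate m)

end LocallyUniform

theorem HasFDerivAt.eventually_dist_le {𝕜 E F : Type*} [NontriviallyNormedField 𝕜]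
    [NormedAddCommGroup E] [NormedSpace 𝕜 E] [NormedAddCommGroup F] [NormedSpace 𝕜 F] {u : E → F}
    {A : E →L[𝕜] F} {p : E} (hu : HasFDerivAt u A p) {q : ℝ} (hq : ‖A‖ < q) :
    ∀ᶠ z in 𝓝 p, dist (u z) (u p) ≤ q * dist z p := by
  filter_upwards [hu.isLittleO.def (sub_pos.2 hq)] with z hz
  rw [dist_eq_norm, dist_eq_norm]
  calc ‖u z - u p‖ ≤ ‖u z - u p - A (z - p)‖ + ‖A (z - p)‖ := by
        simpa using norm_add_le (u z - u p - A (z - p)) (A (z - p))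
    _ ≤ (q - ‖A‖) * ‖z - p‖ + ‖A‖ * ‖z - p‖ := add_le_add hz (A.le_opNorm _)
    _ = q * ‖z - p‖ := by ring

theorem mapsTo_closedBall_diam {α X : Type*} [PseudoMetricSpace X] {B : Set X} (hB : IsBounded B)
    {v : α → X} {S : Set α} {x : α} (hx : x ∈ S) (hv : MapsTo v S B) :
    MapsTo v S (closedBall (v x) (diam B)) :=
  fun _ hy => mem_closedBall.2 (dist_le_diam_of_mem hB (hv hy) (hv hx))

section Holomorphic

variable {E E' : Type*} [NormedAddCommGroup E] [NormedSpace ℂ E] [NormedAddCommGroup E']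
  [NormedSpace ℂ E']

theorem equicontinuousAt_of_differentiableOn_of_mapsTo {ι : Type*} {F : ι → E → E'}
    {D : Set E} {B : Set E'} (hD : IsOpen D) (hB : IsBounded B)
    (hF : ∀ i, DifferentiableOn ℂ (F i) D) (hmaps : ∀ i, MapsTo (F i) D B) {x : E}
    (hx : x ∈ D) : EquicontinuousAt F x := by
  obtain ⟨ρ, hρ, hρD⟩ := isOpen_iff.1 hD x hx
  refine equicontinuousAt_of_continuity_modulus (fun y => diam B / ρ * dist y x) ?_ F ?_
  · simpa using ((continuous_id.dist (continuous_const : Continuous fun _ : E => x)).const_mul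
      (diam B / ρ)).tendsto x
  · filter_upwards [ball_mem_nhds x hρ] with y hy i
    rw [dist_comm]
    exact Complex.dist_le_div_mul_dist_of_mapsTo_ball ((hF i).mono hρD)
      (mapsTo_closedBall_diam hB (mem_ball_self hρ) ((hmaps i).mono_left hρD)) hy

theorem IsCompact.exists_one_lt_norm_homothety_mapsTo {K U : Set E} (hK : IsCompact K)
    (hU : IsOpen U) (hKU : K ⊆ U) (p : E) :
    ∃ c : ℂ, 1 < ‖c‖ ∧ MapsTo (fun x => p + c • (x - p)) K U := by
  have : ∀ᶠ c in 𝓝 (1 : ℂ), ∀ x ∈ K, p + c • (x - p) ∈ U := by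
    refine hK.eventually_forall_of_forall_eventually fun x hx => ?_
    have hcont : Continuous fun q : ℂ × E => p + q.1 • (q.2 - p) := by fun_prop
    exact hcont.continuousAt.preimage_mem_nhds (hU.mem_nhds (by simpa using hKU hx))
  obtain ⟨ε, hε, hεU⟩ := Metric.eventually_nhds_iff.1 this
  refine ⟨((1 + ε / 2 : ℝ) : ℂ), ?_, fun x hx => hεU ?_ x hx⟩
  · rw [Complex.norm_real, Real.norm_of_nonneg (by positivity)]
    linarith
  · rw [Complex.dist_eq, ← Complex.ofReal_one, ← Complex.ofReal_sub, Complex.norm_real,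
      Real.norm_of_nonneg (by linarith)]
    linarith

theorem norm_pow_le_diam_div_of_mapsTo {D : Set E} (hD : IsBounded D) {u : E → E}
    (hu : DifferentiableOn ℂ u D) (hmaps : MapsTo u D D) {p : E} {A : E →L[ℂ] E}
    (hA : HasFDerivAt u A p) (hfix : IsFixedPt u p) {s : ℝ} (hs : 0 < s) (hsD : ball p s ⊆ D)
    (m : ℕ) : ‖A ^ m‖ ≤ diam D / s := by
  rw [← (hA.iterate hfix m).fderiv]
  refine Complex.norm_fderiv_le_div_of_mapsTo_ball ((hu.iterate hmaps m).mono hsD) ?_ hs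
  exact mapsTo_closedBall_diam hD (mem_ball_self hs) ((hmaps.iterate m).mono_left hsD)

theorem tendsto_fderiv_pow_of_mapsTo_isCompact {D K : Set E} (hDo : IsOpen D)
    (hDb : IsBounded D) (hK : IsCompact K) (hKD : K ⊆ D) {h : E → E} (hh : DifferentiableOn ℂ h D)
    (hmaps : MapsTo h D K) {p : E} (hp : p ∈ D) (hfix : IsFixedPt h p) :
    Tendsto (fun m => fderiv ℂ h p ^ m) atTop (𝓝 0) := by
  obtain ⟨c, hc, hcK⟩ := hK.exists_one_lt_norm_homothety_mapsTo hDo hKD p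
  obtain ⟨s, hs, hsD⟩ := isOpen_iff.1 hDo p hp
  set A := fderiv ℂ h p
  have hA : HasFDerivAt (fun x => p + c • (h x - p)) (c • A) p :=
    (((hh.differentiableAt (hDo.mem_nhds hp)).hasFDerivAt.sub_const p).const_smul c).const_add p
  -- the Cauchy estimate for the iterates of the expanded map bounds `‖c‖ ^ m * ‖A ^ m‖`
  have hbound := norm_pow_le_diam_div_of_mapsTo hDb
    (((hh.sub_const p).const_smul c).const_add p) (hcK.comp hmaps) hA
    (by simp [IsFixedPt, hfix.eq]) hs hsD
  have hlim : Tendsto (fun m : ℕ => diam D / s * ‖c‖⁻¹ ^ m) atTop (𝓝 0) := by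
    simpa using (tendsto_pow_atTop_nhds_zero_of_lt_one (by positivity)
      (inv_lt_one_of_one_lt₀ hc)).const_mul (diam D / s)
  refine squeeze_zero_norm (fun m => ?_) hlim
  have := hbound m
  rw [smul_pow, norm_smul, norm_pow] at this
  rw [inv_pow, ← div_eq_mul_inv, le_div_iff₀ (by positivity)]
  linarith

theorem exists_iterate_eventually_dist_le_of_mapsTo_isCompact {D K : Set E} (hDo : IsOpen D)
    (hDb : IsBounded D) (hK : IsCompact K) (hKD : K ⊆ D) {h : E → E}
    (hh : DifferentiableOn ℂ h D) (hmaps : MapsTo h D K) {p : E} (hp : p ∈ D)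
    (hfix : IsFixedPt h p) {q : ℝ} (hq : 0 < q) :
    ∃ m, 0 < m ∧ ∀ᶠ z in 𝓝 p, dist (h^[m] z) p ≤ q * dist z p := by
  have hlim := (tendsto_fderiv_pow_of_mapsTo_isCompact hDo hDb hK hKD hh hmaps hp hfix).norm
  obtain ⟨m, hmq, hm⟩ :=
    ((hlim.eventually (gt_mem_nhds (by simpa using hq))).and (eventually_gt_atTop 0)).exists
  refine ⟨m, hm, ?_⟩
  simpa [(hfix.iterate m).eq] using
    ((hh.differentiableAt (hDo.mem_nhds hp)).hasFDerivAt.iterate hfix m).eventually_dist_le hmq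

theorem tendsto_iterate_of_mapsTo_isCompact {D K : Set E} (hDo : IsOpen D)
    (hDc : IsPreconnected D) (hDb : IsBounded D) (hK : IsCompact K) (hKD : K ⊆ D) {h : E → E}
    (hh : DifferentiableOn ℂ h D) (hmaps : MapsTo h D K) {p : E} (hp : p ∈ D)
    (hfix : IsFixedPt h p) :
    ∀ x ∈ D, Tendsto (fun j => h^[j] x) atTop (𝓝 p) := by
  have hmapsD : MapsTo h D D := hmaps.mono_right hKD
  have hequi : ∀ x ∈ D, EquicontinuousAt (fun j => h^[j]) x := fun x hx =>
    equicontinuousAt_of_differentiableOn_of_mapsTo hDo hDb (hh.iterate hmapsD) hmapsD.iterate hx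
  obtain ⟨m, hm, hcontr⟩ := exists_iterate_eventually_dist_le_of_mapsTo_isCompact hDo hDb hK hKD
    hh hmaps hp hfix one_half_pos
  refine hDc.tendsto_iterate_of_equicontinuousAt hDo hp hequi ?_
  filter_upwards [eventually_tendsto_iterate_of_eventually_dist_le (by norm_num) (by norm_num)
    hcontr] with z hz
  simp only [← iterate_mul] at hz
  exact hfix.tendsto_iterate_of_mapClusterPt (hequi p hp)
    (hz.mapClusterPt.of_comp (tendsto_id.const_mul_atTop' hm))

end Holomorphic

theorem heins_map_continuous_general (n : ℕ) (D : Set (Fin n → ℂ))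
    (hDopen : IsOpen D) (hDconn : IsConnected D) (hDbdd : Bornology.IsBounded D)
    (f : ℕ → (Fin n → ℂ) → (Fin n → ℂ)) (g : (Fin n → ℂ) → (Fin n → ℂ))
    (hf : ∀ k, DifferentiableOn ℂ (f k) D)
    (hfcpt : ∀ k, IsCompact (closure (f k '' D)))
    (hfsub : ∀ k, closure (f k '' D) ⊆ D)
    (hg : DifferentiableOn ℂ g D) (hgmaps : Set.MapsTo g D D)
    (hgcpt : IsCompact (closure (g '' D))) (hgsub : closure (g '' D) ⊆ D)
    (hconv : TendstoLocallyUniformlyOn (fun k => f k) g Filter.atTop D)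
    (z : ℕ → Fin n → ℂ) (hz : ∀ k, z k ∈ D) (hzfix : ∀ k, f k (z k) = z k)
    (w : Fin n → ℂ) (hw : w ∈ D) (hwfix : g w = w) :
    Filter.Tendsto z Filter.atTop (nhds w) := by
  have hmaps_closure (u : (Fin n → ℂ) → Fin n → ℂ) : MapsTo u D (closure (u '' D)) :=
    fun x hx => subset_closure (mem_image_of_mem u hx)
  obtain ⟨m, hm, hcontr⟩ := exists_iterate_eventually_dist_le_of_mapsTo_isCompact hDopen hDbdd
    hgcpt hgsub hg (hmaps_closure g) hw hwfix one_half_pos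
  obtain ⟨r, hr, hrD⟩ := nhds_basis_closedBall.mem_iff.1 (inter_mem (hDopen.mem_nhds hw) hcontr)
  have hunif : TendstoUniformlyOn (fun k => (f k)^[m]) g^[m] atTop (closedBall w r) :=
    (tendstoLocallyUniformlyOn_iff_tendstoUniformlyOn_of_compact (isCompact_closedBall w r)).1
      ((hconv.iterate hg.continuousOn hDopen hgmaps m).mono fun x hx => (hrD hx).1)
  refine Metric.tendsto_nhds.2 fun ε hε => ?_
  filter_upwards [Metric.tendstoUniformlyOn_iff.1 hunif (min (r / 2) (ε / 4)) (by positivity)]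
    with k hk
  have horbit : Tendsto (fun i => ((f k)^[m])^[i] w) atTop (𝓝 (z k)) := by
    simpa only [comp_def, id, ← iterate_mul] using (tendsto_iterate_of_mapsTo_isCompact hDopen
      hDconn.isPreconnected hDbdd (hfcpt k) (hfsub k) (hf k) (hmaps_closure _) (hz k) (hzfix k)
      w hw).comp (tendsto_id.const_mul_atTop' hm)
  have := ((show IsFixedPt (f k) (z k) from hzfix k).iterate m).dist_le_of_tendsto_iterate horbit
    (fun x hx => (hrD hx).2) (fun x hx => (hk x hx).le) hr.le (by norm_num)
    (by linarith [min_le_left (r / 2) (ε / 4)])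
  linarith [min_le_right (r / 2) (ε / 4)]

/-- Continuity of the Heins map on a bounded domain `D ⊆ ℂⁿ`: if holomorphic
self-maps `f_k` of `D` with relatively compact images converge locally uniformly
on `D` to `f` (also with relatively compact image), then their (unique) fixed
points `τ(f_k)` converge to the fixed point `τ(f)` of `f`. -/
theorem heins_map_continuous (n : ℕ) (D : Set (Fin n → ℂ))
    (hDopen : IsOpen D) (hDconn : IsConnected D) (hDbdd : Bornology.IsBounded D)
    (f : ℕ → (Fin n → ℂ) → (Fin n → ℂ)) (g : (Fin n → ℂ) → (Fin n → ℂ))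
    (hf : ∀ k, DifferentiableOn ℂ (f k) D) (hfmaps : ∀ k, Set.MapsTo (f k) D D)
    (hfcpt : ∀ k, IsCompact (closure (f k '' D)))
    (hfsub : ∀ k, closure (f k '' D) ⊆ D)
    (hg : DifferentiableOn ℂ g D) (hgmaps : Set.MapsTo g D D)
    (hgcpt : IsCompact (closure (g '' D))) (hgsub : closure (g '' D) ⊆ D)
    (hconv : TendstoLocallyUniformlyOn (fun k => f k) g Filter.atTop D)
    (z : ℕ → Fin n → ℂ) (hz : ∀ k, z k ∈ D) (hzfix : ∀ k, f k (z k) = z k)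
    (w : Fin n → ℂ) (hw : w ∈ D) (hwfix : g w = w) :
    Filter.Tendsto z Filter.atTop (nhds w) :=
  heins_map_continuous_general n D hDopen hDconn hDbdd f g hf hfcpt hfsub hg hgmaps hgcpt hgsub
    hconv z hz hzfix w hw hwfix
end

section
/- Let D ⊂ ℂⁿ be a bounded domain, Y ⊂ ℂ^m a nonempty open set, and F : Y × D → D a holomorphic map such that for every y ∈ Y the map f_y = F(y,·) : D → D has image with compact closure contained in D. Then the map τ_F : Y → D, defined by letting τ_F(y) be the unique fixed point of f_y, is holomorphic. -/
/-!
Fix `y₀ ∈ Y`, let `f = F (y₀, ·)` and `p = τ y₀`. Since `f '' D` is relatively compact in `D`,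
the slightly expanded map `z ↦ p + c • (f z - p)`, `1 < ‖c‖`, still maps `D` into `D`; the
Cauchy estimates for its iterates at `p` give `‖f'(p) ^ k‖ = O(‖c‖⁻ᵏ)`. So `p` is an attracting
fixed point of some iterate `h = f^[k]`; as the iterates of `h` are equicontinuous on `D`
(Cauchy estimates again), the basin of `p` is open and closed in `D`, hence all of `D`, and `p`
is the only fixed point of `f` in `D` (Ritt–Wavre).

Uniqueness and compactness make `τ` continuous at `y₀`: limits of `τ` along ultrafilters are
fixed points of `f`. Finally `1 - f'(p)` is injective because `f'(p) ^ k → 0`, and the easy half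
of the inverse function theorem, applied to `(y, z) ↦ (y, z - F (y, z))` along the graph of the
continuous map `τ`, shows that `τ` is differentiable at `y₀`.
-/

open Metric Set Function Filter Bornology
open scoped Topology Uniformity

theorem tendsto_iterate_of_dist_le_mul {X : Type*} [PseudoMetricSpace X] {h : X → X} {p : X}
    {r q : ℝ} (hq₀ : 0 ≤ q) (hq : q < 1) (hh : ∀ z ∈ ball p r, dist (h z) p ≤ q * dist z p)
    {z : X} (hz : z ∈ ball p r) : Tendsto (fun k => h^[k] z) atTop (𝓝 p) := by
  have hdist : ∀ k, dist (h^[k] z) p ≤ q ^ k * dist z p := by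
    intro k
    induction k with
    | zero => simp
    | succ k ih =>
      have hk : h^[k] z ∈ ball p r :=
        (ih.trans (mul_le_of_le_one_left dist_nonneg (pow_le_one₀ hq₀ hq.le))).trans_lt hz
      rw [iterate_succ_apply', pow_succ', mul_assoc]
      exact (hh _ hk).trans (mul_le_mul_of_nonneg_left ih hq₀)
  refine tendsto_iff_dist_tendsto_zero.2 (squeeze_zero (fun _ => dist_nonneg) hdist ?_)
  simpa using (tendsto_pow_atTop_nhds_zero_of_lt_one hq₀ hq).mul_const (dist z p)

theorem tendsto_of_tendsto_uniformity_apply {ι X : Type*} [UniformSpace X] [T2Space X]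
    {f : X → X} {D K : Set X} {p : X} (hK : IsCompact K) (hKD : K ⊆ D) (hf : ContinuousOn f D)
    (hfK : MapsTo f D K) (huniq : ∀ q ∈ K, f q = q → q = p) {l : Filter ι} {x : ι → X}
    (hx : ∀ᶠ i in l, x i ∈ D) (happrox : Tendsto (fun i => (f (x i), x i)) l (𝓤 X)) :
    Tendsto x l (𝓝 p) := by
  refine (tendsto_iff_ultrafilter _ _ _).2 fun 𝒰 h𝒰 => ?_
  have hx𝒰 : ∀ᶠ i in 𝒰, x i ∈ D := h𝒰 hx
  obtain ⟨q, hqK, hq⟩ := hK.ultrafilter_le_nhds (𝒰.map (f ∘ x))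
    (le_principal_iff.2 (hx𝒰.mono fun i hi => hfK hi))
  have hxq : Tendsto x 𝒰 (𝓝 q) := Tendsto.congr_uniformity hq (happrox.mono_left h𝒰)
  have hfxq : Tendsto (f ∘ x) 𝒰 (𝓝 (f q)) :=
    (hf q (hKD hqK)).tendsto.comp (tendsto_nhdsWithin_iff.2 ⟨hxq, hx𝒰⟩)
  rwa [← huniq q hqK (tendsto_nhds_unique hfxq hq)]

section Normed

variable {𝕜 E G : Type*} [NontriviallyNormedField 𝕜] [NormedAddCommGroup E] [NormedSpace 𝕜 E]
  [NormedAddCommGroup G] [NormedSpace 𝕜 G]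

theorem HasFDerivAt.exists_ball_tendsto_iterate {h : G → G} {A : G →L[𝕜] G} {p : G}
    (hA : HasFDerivAt h A p) (hp : h p = p) (hA1 : ‖A‖ < 1) :
    ∃ r > 0, ∀ z ∈ ball p r, Tendsto (fun k => h^[k] z) atTop (𝓝 p) := by
  obtain ⟨r, hr, hlo⟩ := Metric.eventually_nhds_iff_ball.1
    (hA.isLittleO.def (half_pos (sub_pos.2 hA1)))
  refine ⟨r, hr, fun z => tendsto_iterate_of_dist_le_mul (q := (‖A‖ + 1) / 2) (by positivity)
    (by linarith) fun w hw => ?_⟩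
  have hw' := hlo w hw
  rw [hp] at hw'
  rw [dist_eq_norm, dist_eq_norm]
  calc ‖h w - p‖ ≤ ‖h w - p - A (w - p)‖ + ‖A (w - p)‖ := norm_le_norm_sub_add _ _
    _ ≤ (1 - ‖A‖) / 2 * ‖w - p‖ + ‖A‖ * ‖w - p‖ := add_le_add hw' (A.le_opNorm _)
    _ = (‖A‖ + 1) / 2 * ‖w - p‖ := by ring

theorem eq_zero_of_apply_eq_self_of_tendsto_norm_pow {A : G →L[𝕜] G}
    (hA : Tendsto (fun k => ‖A ^ k‖) atTop (𝓝 0)) {v : G} (hv : A v = v) : v = 0 := by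
  have hle : ∀ k, ‖v‖ ≤ ‖A ^ k‖ * ‖v‖ := fun k => by
    have hAk : (A ^ k) v = v := by
      rw [← ContinuousLinearMap.coe_coe, ContinuousLinearMap.toLinearMap_pow, Module.End.pow_apply]
      exact iterate_fixed hv k
    simpa [hAk] using (A ^ k).le_opNorm v
  exact norm_le_zero_iff.1 (by simpa using ge_of_tendsto' (hA.mul_const ‖v‖) hle)

theorem differentiableAt_of_eventually_isFixedPt [CompleteSpace 𝕜] [FiniteDimensional 𝕜 G]
    {F : E × G → G} {τ : E → G} {y₀ : E} (hF : DifferentiableAt 𝕜 F (y₀, τ y₀))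
    (hτ : ContinuousAt τ y₀)
    (hfix : ∀ᶠ y in 𝓝 y₀, IsFixedPt (fun z => F (y, z)) (τ y))
    (hinj : ∀ v, fderiv 𝕜 F (y₀, τ y₀) (0, v) = v → v = 0) :
    DifferentiableAt 𝕜 τ y₀ := by
  set L := fderiv 𝕜 F (y₀, τ y₀)
  set T : G →L[𝕜] G := .id 𝕜 G - L ∘L .inr 𝕜 E G
  have hT : Injective T := (injective_iff_map_eq_zero T).2 fun v hv =>
    hinj v (sub_eq_zero.1 hv).symm
  set S : G ≃L[𝕜] G := (LinearEquiv.ofInjectiveEndo (T : G →ₗ[𝕜] G) hT).toContinuousLinearEquiv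
  -- `Φ (y, z) = (y, z - F (y, z))` sends the graph of `τ` to `E × {0}`, and its derivative
  -- `(u, v) ↦ (u, T v - L (u, 0))` is inverted by `(a, b) ↦ (a, T⁻¹ (b + L (a, 0)))`.
  have hΦ : HasFDerivAt (fun x : E × G => (x.1, x.2 - F x))
      ((ContinuousLinearMap.fst 𝕜 E G).prod (ContinuousLinearMap.snd 𝕜 E G - L)) (y₀, τ y₀) :=
    hasFDerivAt_fst.prodMk (hasFDerivAt_snd.sub hF.hasFDerivAt)
  have hinv : LeftInverse ((ContinuousLinearMap.fst 𝕜 E G).prod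
      ((S.symm : G →L[𝕜] G) ∘L (ContinuousLinearMap.snd 𝕜 E G + L ∘L .inl 𝕜 E G ∘L .fst 𝕜 E G)))
      ((ContinuousLinearMap.fst 𝕜 E G).prod (ContinuousLinearMap.snd 𝕜 E G - L)) := by
    rintro ⟨u, v⟩
    have hL : L (u, v) = L (u, 0) + L (0, v) := by
      rw [← map_add, Prod.mk_add_mk, add_zero, zero_add]
    have hS : v - L (u, v) + L (u, 0) = S v := by
      rw [hL]
      change _ = v - L (0, v)
      abel
    simp only [ContinuousLinearMap.prod_apply, ContinuousLinearMap.coe_fst',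
      add_apply, ContinuousLinearMap.comp_apply, ContinuousLinearMap.coe_snd',
      sub_apply, ContinuousLinearMap.inl_apply, hS, ContinuousLinearEquiv.coe_coe,
      ContinuousLinearEquiv.symm_apply_apply]
  have hgraph : HasFDerivAt (fun y => (y, τ y)) _ y₀ :=
    hΦ.of_comp_of_leftInverse (continuousAt_id.prodMk hτ)
      (ContinuousLinearMap.inl 𝕜 E G).hasFDerivAt
      (hfix.mono fun y hy => by simp [hy.eq]) hinv
  exact hgraph.differentiableAt.snd

end Normed

section Complex

variable {E E' : Type*} [NormedAddCommGroup E] [NormedSpace ℂ E]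
  [NormedAddCommGroup E'] [NormedSpace ℂ E']

theorem equicontinuousAt_of_mapsTo_isBounded {ι : Type*} {u : ι → E → E'} {U : Set E}
    {S : Set E'} (hU : IsOpen U) (hS : IsBounded S) (hu : ∀ i, DifferentiableOn ℂ (u i) U)
    (hmaps : ∀ i, MapsTo (u i) U S) {x : E} (hx : x ∈ U) : EquicontinuousAt u x := by
  obtain ⟨r, hr, hrU⟩ := Metric.isOpen_iff.1 hU x hx
  obtain ⟨R, hRS⟩ := hS.subset_closedBall 0
  refine Metric.equicontinuousAt_of_continuity_modulus (fun w => 2 * R / r * dist w x) ?_ u ?_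
  · have : Continuous fun w => 2 * R / r * dist w x := by fun_prop
    simpa using this.tendsto x
  filter_upwards [ball_mem_nhds x hr] with w hw i
  have hux : dist (u i x) 0 ≤ R := hRS (hmaps i (hrU (mem_ball_self hr)))
  have hball : MapsTo (u i) (ball x r) (closedBall (u i x) (2 * R)) := fun y hy =>
    closedBall_subset_closedBall' (by rw [dist_comm]; linarith) (hRS (hmaps i (hrU hy)))
  rw [dist_comm]
  exact Complex.dist_le_div_mul_dist_of_mapsTo_ball ((hu i).mono hrU) hball hw

variable {f : E → E} {D K : Set E} {p : E}

theorem exists_norm_fderiv_pow_le_of_mapsTo (hD : IsOpen D) (hDb : IsBounded D)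
    (hf : DifferentiableOn ℂ f D) (hfD : MapsTo f D D) (hp : p ∈ D) (hfp : f p = p) :
    ∃ C, ∀ k, ‖fderiv ℂ f p ^ k‖ ≤ C := by
  obtain ⟨r, hr, hrD⟩ := Metric.isOpen_iff.1 hD p hp
  obtain ⟨R, hRD⟩ := hDb.subset_closedBall p
  refine ⟨R / r, fun k => ?_⟩
  have hfk : HasFDerivAt f^[k] (fderiv ℂ f p ^ k) p :=
    (hf.differentiableAt (hD.mem_nhds hp)).hasFDerivAt.iterate hfp k
  have hball : MapsTo f^[k] (ball p r) (closedBall (f^[k] p) R) := by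
    rw [iterate_fixed hfp k]
    exact ((hfD.iterate k).mono_left hrD).mono_right hRD
  rw [← hfk.fderiv]
  exact Complex.norm_fderiv_le_div_of_mapsTo_ball ((hf.iterate hfD k).mono hrD) hball hr

theorem exists_one_lt_norm_mapsTo_smul_sub (hD : IsOpen D) (hK : IsCompact K) (hKD : K ⊆ D)
    (hfK : MapsTo f D K) (p : E) :
    ∃ c : ℂ, 1 < ‖c‖ ∧ MapsTo (fun z => p + c • (f z - p)) D D := by
  obtain ⟨δ, hδ, hδD⟩ := hK.exists_thickening_subset_open hD hKD
  obtain ⟨R, hR, hKR⟩ := hK.isBounded.subset_closedBall_lt 0 p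
  set ε := δ / (2 * R)
  have hε : 0 < ε := by positivity
  refine ⟨((1 + ε : ℝ) : ℂ), ?_, fun z hz => hδD ?_⟩
  · rw [Complex.norm_real, Real.norm_of_nonneg (by positivity)]
    linarith
  refine mem_thickening_iff.2 ⟨f z, hfK hz, ?_⟩
  have hfz : ‖f z - p‖ ≤ R := by simpa [dist_eq_norm] using hKR (hfK hz)
  calc dist (p + ((1 + ε : ℝ) : ℂ) • (f z - p)) (f z) = ε * ‖f z - p‖ := by
        rw [dist_eq_norm, Complex.ofReal_add, Complex.ofReal_one, add_smul, one_smul,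
          show p + (f z - p + (ε : ℂ) • (f z - p)) - f z = (ε : ℂ) • (f z - p) by abel,
          norm_smul, Complex.norm_real, Real.norm_of_nonneg hε.le]
    _ ≤ ε * R := mul_le_mul_of_nonneg_left hfz hε.le
    _ = δ / 2 := by simp only [ε]; field_simp
    _ < δ := half_lt_self hδ

theorem tendsto_norm_fderiv_pow_nhds_zero (hD : IsOpen D) (hDb : IsBounded D)
    (hf : DifferentiableOn ℂ f D) (hK : IsCompact K) (hKD : K ⊆ D) (hfK : MapsTo f D K)
    (hp : p ∈ D) (hfp : f p = p) : Tendsto (fun k => ‖fderiv ℂ f p ^ k‖) atTop (𝓝 0) := by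
  obtain ⟨c, hc, hcD⟩ := exists_one_lt_norm_mapsTo_smul_sub hD hK hKD hfK p
  have hfA : HasFDerivAt f (fderiv ℂ f p) p := (hf.differentiableAt (hD.mem_nhds hp)).hasFDerivAt
  have hg : HasFDerivAt (fun z => p + c • (f z - p)) (c • fderiv ℂ f p) p :=
    ((hfA.sub_const p).const_smul c).const_add p
  obtain ⟨C, hC⟩ := exists_norm_fderiv_pow_le_of_mapsTo (f := fun z => p + c • (f z - p))
    hD hDb (((hf.sub_const p).const_smul c).const_add p) hcD hp (by simp [hfp])
  have hbound : ∀ k, ‖fderiv ℂ f p ^ k‖ ≤ C * ‖c‖⁻¹ ^ k := fun k => by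
    have hk := hC k
    rw [hg.fderiv, smul_pow, norm_smul, norm_pow] at hk
    rw [inv_pow, ← div_eq_mul_inv, le_div_iff₀' (by positivity)]
    exact hk
  refine squeeze_zero (fun _ => norm_nonneg _) hbound ?_
  simpa using (tendsto_pow_atTop_nhds_zero_of_lt_one (by positivity)
    (inv_lt_one_of_one_lt₀ hc)).const_mul C

theorem eq_of_isFixedPt_of_mapsTo_isCompact (hD : IsOpen D) (hDc : IsPreconnected D)
    (hDb : IsBounded D) (hf : DifferentiableOn ℂ f D) (hK : IsCompact K) (hKD : K ⊆ D)
    (hfK : MapsTo f D K) (hp : p ∈ D) (hfp : f p = p) {q : E} (hq : q ∈ D) (hfq : f q = q) :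
    q = p := by
  have hfD : MapsTo f D D := hfK.mono_right hKD
  obtain ⟨k, hk⟩ := ((tendsto_norm_fderiv_pow_nhds_zero hD hDb hf hK hKD hfK hp hfp).eventually
    (gt_mem_nhds one_pos)).exists
  set h := f^[k]
  have hhD : MapsTo h D D := hfD.iterate k
  have hh : DifferentiableOn ℂ h D := hf.iterate hfD k
  obtain ⟨r, hr, hattr⟩ := ((hf.differentiableAt (hD.mem_nhds hp)).hasFDerivAt.iterate hfp
    k).exists_ball_tendsto_iterate (iterate_fixed hfp k) hk
  have hequi : ∀ z ∈ D, EquicontinuousAt (fun j => h^[j]) z := fun z hz =>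
    equicontinuousAt_of_mapsTo_isBounded hD hDb (hh.iterate hhD) hhD.iterate hz
  set B := {z ∈ D | Tendsto (fun j => h^[j] z) atTop (𝓝 p)}
  have hBopen : IsOpen B := isOpen_iff_mem_nhds.2 fun z ⟨hzD, hz⟩ => by
    obtain ⟨N, hN⟩ := (hz.eventually (ball_mem_nhds p (half_pos hr))).exists
    filter_upwards [hD.mem_nhds hzD,
      Metric.equicontinuousAt_iff_right.1 (hequi z hzD) _ (half_pos hr)] with w hwD hw
    have hNw : h^[N] w ∈ ball p r := calc
      dist (h^[N] w) p ≤ dist (h^[N] z) (h^[N] w) + dist (h^[N] z) p := dist_triangle_left _ _ _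
      _ < r / 2 + r / 2 := add_lt_add (hw N) hN
      _ = r := add_halves r
    refine ⟨hwD, (tendsto_add_atTop_iff_nat N).1 ?_⟩
    simpa only [iterate_add_apply] using hattr _ hNw
  have hBclosed : closure B ∩ D ⊆ B := fun z ⟨hzB, hzD⟩ =>
    ⟨hzD, (hequi z hzD).tendsto_of_mem_closure tendsto_const_nhds (fun _ hy => hy.2) hzB⟩
  have hpfix : ∀ j, h^[j] p = p := iterate_fixed (iterate_fixed hfp k)
  have hpB : p ∈ B := ⟨hp, by simp only [hpfix]; exact tendsto_const_nhds⟩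
  have hqB : q ∈ B := hDc.subset_of_closure_inter_subset hBopen ⟨p, hp, hpB⟩ hBclosed hq
  have hqfix : ∀ j, h^[j] q = q := iterate_fixed (iterate_fixed hfq k)
  exact tendsto_nhds_unique (by simp only [hqfix]; exact tendsto_const_nhds) hqB.2

end Complex

theorem heins_map_holomorphic_family_general (n m : ℕ)
    (D : Set (Fin n → ℂ)) (hDopen : IsOpen D) (hDconn : IsConnected D)
    (hDbdd : Bornology.IsBounded D)
    (Y : Set (Fin m → ℂ)) (hYopen : IsOpen Y)
    (F : (Fin m → ℂ) × (Fin n → ℂ) → (Fin n → ℂ))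
    (hF : DifferentiableOn ℂ F (Y ×ˢ D))
    (hFcpt : ∀ y ∈ Y, IsCompact (closure ((fun z => F (y, z)) '' D)))
    (hFsub : ∀ y ∈ Y, closure ((fun z => F (y, z)) '' D) ⊆ D)
    (τ : (Fin m → ℂ) → (Fin n → ℂ))
    (hτmem : ∀ y ∈ Y, τ y ∈ D) (hτfix : ∀ y ∈ Y, F (y, τ y) = τ y) :
    DifferentiableOn ℂ τ Y := by
  have hmaps : ∀ y ∈ Y, MapsTo (fun z => F (y, z)) D (closure ((fun z => F (y, z)) '' D)) :=
    fun y _ z hz => subset_closure (mem_image_of_mem _ hz)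
  have hslice : ∀ y ∈ Y, DifferentiableOn ℂ (fun z => F (y, z)) D := fun y hy =>
    hF.comp ((differentiableOn_const y).prodMk differentiableOn_id) fun _ hz => ⟨hy, hz⟩
  intro y₀ hy₀
  have hFd : DifferentiableAt ℂ F (y₀, τ y₀) :=
    hF.differentiableAt ((hYopen.prod hDopen).mem_nhds ⟨hy₀, hτmem y₀ hy₀⟩)
  have huniq : ∀ q ∈ D, F (y₀, q) = q → q = τ y₀ := fun q hq hfq =>
    eq_of_isFixedPt_of_mapsTo_isCompact hDopen hDconn.isPreconnected hDbdd (hslice y₀ hy₀)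
      (hFcpt y₀ hy₀) (hFsub y₀ hy₀) (hmaps y₀ hy₀) (hτmem y₀ hy₀) (hτfix y₀ hy₀) hq hfq
  have hequi : EquicontinuousAt (fun z : D => fun y => F (y, z)) y₀ :=
    equicontinuousAt_of_mapsTo_isBounded hYopen hDbdd
      (fun z : D => hF.comp (differentiableOn_id.prodMk (differentiableOn_const z.1))
        fun _ hy => ⟨hy, z.2⟩)
      (fun (z : D) y hy => hFsub y hy (hmaps y hy z.2)) hy₀
  have hτY : ∀ᶠ y in 𝓝 y₀, y ∈ Y := hYopen.mem_nhds hy₀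
  have hcont : ContinuousAt τ y₀ :=
    tendsto_of_tendsto_uniformity_apply (hFcpt y₀ hy₀) (hFsub y₀ hy₀)
      (hslice y₀ hy₀).continuousOn (hmaps y₀ hy₀) (fun q hq => huniq q (hFsub y₀ hy₀ hq))
      (hτY.mono hτmem)
      fun U hU => by
        rw [mem_map]
        filter_upwards [hequi U hU, hτY] with y hy hyY
        simpa [hτfix y hyY] using hy ⟨τ y, hτmem y hyY⟩
  have hA : HasFDerivAt (fun z => F (y₀, z)) (fderiv ℂ F (y₀, τ y₀) ∘L .inr ℂ _ _) (τ y₀) :=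
    hFd.hasFDerivAt.comp _ (hasFDerivAt_prodMk_right y₀ (τ y₀))
  have hdecay := tendsto_norm_fderiv_pow_nhds_zero hDopen hDbdd (hslice y₀ hy₀) (hFcpt y₀ hy₀)
    (hFsub y₀ hy₀) (hmaps y₀ hy₀) (hτmem y₀ hy₀) (hτfix y₀ hy₀)
  rw [hA.fderiv] at hdecay
  exact (differentiableAt_of_eventually_isFixedPt hFd hcont (hτY.mono hτfix)
    fun v => eq_zero_of_apply_eq_self_of_tendsto_norm_pow hdecay).differentiableWithinAt

/-- Theorem 2.3 (bounded-domain case): if `F : Y × D → D` is holomorphic and each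
slice `f_y = F(y,·)` has relatively compact image in `D`, then the map `τ_F`
assigning to `y` the unique fixed point of `f_y` is holomorphic on `Y`. -/
theorem heins_map_holomorphic_family (n m : ℕ)
    (D : Set (Fin n → ℂ)) (hDopen : IsOpen D) (hDconn : IsConnected D)
    (hDbdd : Bornology.IsBounded D)
    (Y : Set (Fin m → ℂ)) (hYopen : IsOpen Y) (hYne : Y.Nonempty)
    (F : (Fin m → ℂ) × (Fin n → ℂ) → (Fin n → ℂ))
    (hF : DifferentiableOn ℂ F (Y ×ˢ D))
    (hFmaps : ∀ y ∈ Y, ∀ z ∈ D, F (y, z) ∈ D)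
    (hFcpt : ∀ y ∈ Y, IsCompact (closure ((fun z => F (y, z)) '' D)))
    (hFsub : ∀ y ∈ Y, closure ((fun z => F (y, z)) '' D) ⊆ D)
    (τ : (Fin m → ℂ) → (Fin n → ℂ))
    (hτmem : ∀ y ∈ Y, τ y ∈ D) (hτfix : ∀ y ∈ Y, F (y, τ y) = τ y) :
    DifferentiableOn ℂ τ Y :=
  heins_map_holomorphic_family_general n m D hDopen hDconn hDbdd Y hYopen F hF hFcpt hFsub τ hτmem
    hτfix
end
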